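/- arXiv:2305.09465 — 6 statements merged into one kernel-verified Lean document; each statement's English description precedes it below -/
import Mathlib

section
/- Let m ≥ 3 and n ≥ 2 be integers and let r ≠ 1 be a unit of ℤ/nℤ of multiplicative order m such that r − 1 is also a unit of ℤ/nℤ. Then the Hamilton compression of X(m,n;r) satisfies κ(X(m,n;r)) ≥ m. -/
open SimpleGraph

/-- The automorphism group of a simple graph, as a subgroup of the permutation group
of the vertex set. -/
def autSubgroup {V : Type*} (X : SimpleGraph V) : Subgroup (Equiv.Perm V) where
  carrier := {π | ∀ u v : V, X.Adj (π u) (π v) ↔ X.Adj u v}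
  one_mem' := fun u v => Iff.rfl
  mul_mem' := fun {a b} ha hb u v => (ha (b u) (b v)).trans (hb u v)
  inv_mem' := fun {a} ha u v => by simpa using (ha (a⁻¹ u) (a⁻¹ v)).symm

/-- `c` is a Hamilton cycle of `X`, presented as a cyclic enumeration
`v_0, v_1, …, v_{N-1}` of the vertices (indices modulo `N = |V|`) with consecutive
vertices adjacent. -/
def IsHamCycle {V : Type*} [Fintype V] (X : SimpleGraph V)
    (c : ZMod (Fintype.card V) → V) : Prop :=
  Function.Bijective c ∧ ∀ i, X.Adj (c i) (c (i + 1))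

/-- The Hamilton cycle `c` of `X` is `k`-symmetric: `k ∣ N` and some automorphism `α`
of `X` satisfies `α (v_i) = v_{i + N/k}` for all `i`. -/
def IsSymmHamCycle {V : Type*} [Fintype V] (X : SimpleGraph V)
    (c : ZMod (Fintype.card V) → V) (k : ℕ) : Prop :=
  k ∣ Fintype.card V ∧
    ∃ α ∈ autSubgroup X, ∀ i, α (c i) = c (i + (Fintype.card V / k : ℕ))

/-- The Hamilton compression `κ(X)` of a graph `X`: the largest `k` such that some
Hamilton cycle of `X` is `k`-symmetric (and `0` if `X` has no Hamilton cycle). -/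
noncomputable def hamiltonCompression {V : Type*} [Fintype V] (X : SimpleGraph V) : ℕ :=
  sSup {k | ∃ c, IsHamCycle X c ∧ IsSymmHamCycle X c k}

/-- The metacirculant graph `X(m,n;r)` on vertex set `ℤ/m × ℤ/n`: vertex `(i,j)` is
adjacent to `(i, j ± r^i)` and `(i ± 1, j)`. -/
def metaGraph (m n : ℕ) (r : (ZMod n)ˣ) : SimpleGraph (ZMod m × ZMod n) :=
  SimpleGraph.fromRel (fun u v =>
    (u.1 = v.1 ∧ v.2 = u.2 + (r : ZMod n) ^ u.1.val) ∨ (u.2 = v.2 ∧ v.1 = u.1 + 1))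

section MyAux

variable {m n : ℕ} (r : (ZMod n)ˣ)

/-- The automorphism `(i,j) ↦ (i+1, r·j)` of `X(m,n;r)`. -/
def myAlpha (m n : ℕ) (r : (ZMod n)ˣ) : Equiv.Perm (ZMod m × ZMod n) where
  toFun p := (p.1 + 1, (r : ZMod n) * p.2)
  invFun p := (p.1 - 1, ((r⁻¹ : (ZMod n)ˣ) : ZMod n) * p.2)
  left_inv p := by simp
  right_inv p := by simp

/-- The Hamilton cycle, as a function on ℕ. -/
def myCyc (m n : ℕ) (r : (ZMod n)ˣ) (j0 : ZMod n) (k : ℕ) : ZMod m × ZMod n :=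
  ((k / n : ZMod m), (r : ZMod n) ^ (k / n) * (j0 + (k % n : ZMod n)))

lemma my_pow_congr (hord : orderOf r = m) {a b : ℕ} (h : a % m = b % m) :
    (r : ZMod n) ^ a = (r : ZMod n) ^ b := by
  have hu : r ^ a = r ^ b := by
    rw [pow_eq_pow_iff_modEq, hord]; exact h
  calc (r : ZMod n) ^ a = ((r ^ a : (ZMod n)ˣ) : ZMod n) := (Units.val_pow_eq_pow_val r a).symm
    _ = ((r ^ b : (ZMod n)ˣ) : ZMod n) := by rw [hu]
    _ = (r : ZMod n) ^ b := Units.val_pow_eq_pow_val r b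

lemma myCyc_period (hn0 : 0 < n) (hord : orderOf r = m) (j0 : ZMod n) (k : ℕ) :
    myCyc m n r j0 (k + m * n) = myCyc m n r j0 k := by
  unfold myCyc
  have h1 : (k + m * n) / n = k / n + m := Nat.add_mul_div_right k m hn0
  have h2 : (k + m * n) % n = k % n := Nat.add_mul_mod_self_right k m n
  rw [h1, h2]
  refine Prod.ext ?_ ?_
  · push_cast [ZMod.natCast_self]; ring
  · have h3 : (r : ZMod n) ^ (k / n + m) = (r : ZMod n) ^ (k / n) :=
      my_pow_congr r hord (Nat.add_mod_right (k / n) m)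
    rw [h3]

lemma myCyc_mod (hn0 : 0 < n) (hord : orderOf r = m) (j0 : ZMod n) (k : ℕ) :
    myCyc m n r j0 (k % (m * n)) = myCyc m n r j0 k := by
  conv_rhs => rw [← Nat.mod_add_div k (m * n)]
  generalize k / (m * n) = q
  induction q with
  | zero => simp
  | succ q ih =>
      rw [Nat.mul_succ, ← add_assoc, myCyc_period r hn0 hord, ih]

lemma myCyc_adj (hm : 3 ≤ m) (hn : 2 ≤ n) (hord : orderOf r = m)
    {j0 : ZMod n} (hj0 : (r : ZMod n) * j0 = j0 - 1) (k : ℕ) :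
    (metaGraph m n r).Adj (myCyc m n r j0 k) (myCyc m n r j0 (k + 1)) := by
  haveI : Fact (1 < n) := ⟨by omega⟩
  haveI : Fact (1 < m) := ⟨by omega⟩
  have hn0 : 0 < n := by omega
  have hk : n * (k / n) + k % n = k := Nat.div_add_mod k n
  have hilt : k % n < n := Nat.mod_lt k hn0
  rw [metaGraph, fromRel_adj]
  rcases lt_or_ge (k % n + 1) n with hlt | hge
  · have hdiv : (k + 1) / n = k / n := by
      conv_lhs => rw [← hk]
      rw [add_assoc, Nat.mul_add_div hn0, Nat.div_eq_of_lt hlt, add_zero]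
    have hmod : (k + 1) % n = k % n + 1 := by
      conv_lhs => rw [← hk]
      rw [add_assoc, Nat.mul_add_mod, Nat.mod_eq_of_lt hlt]
    constructor
    · intro h
      have h2 := congrArg Prod.snd h
      simp only [myCyc, hdiv, hmod] at h2
      rw [← Units.val_pow_eq_pow_val, Units.mul_right_inj] at h2
      have h3 : ((k % n : ℕ) : ZMod n) = ((k % n : ℕ) : ZMod n) + 1 := by
        have := add_left_cancel h2; push_cast at this ⊢; exact this
      have h0 : (0 : ZMod n) = 1 := by
        have := congrArg (· - ((k % n : ℕ) : ZMod n)) h3; simpa using this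
      exact one_ne_zero h0.symm
    · have hv : myCyc m n r j0 (k + 1)
          = (((k / n : ℕ) : ZMod m), (r : ZMod n) ^ (k / n) * (j0 + ((k % n + 1 : ℕ) : ZMod n))) := by
        simp only [myCyc, hdiv, hmod]
      rw [hv]
      refine Or.inl (Or.inl ⟨rfl, ?_⟩)
      show (r : ZMod n) ^ (k / n) * (j0 + ((k % n + 1 : ℕ) : ZMod n))
        = (r : ZMod n) ^ (k / n) * (j0 + ((k % n : ℕ) : ZMod n)) + (r : ZMod n) ^ ((k / n : ℕ) : ZMod m).val
      have hv : ((k / n : ℕ) : ZMod m).val = k / n % m := ZMod.val_natCast _ _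
      rw [hv, my_pow_congr r hord (Nat.mod_mod_of_dvd (k / n) dvd_rfl)]
      push_cast
      ring
  · have hi : k % n = n - 1 := by omega
    have hmul : n * (k / n + 1) = n * (k / n) + n := by ring
    have hk1 : k + 1 = n * (k / n + 1) := by omega
    have hdiv : (k + 1) / n = k / n + 1 := by
      rw [hk1, Nat.mul_div_cancel_left _ hn0]
    have hmod : (k + 1) % n = 0 := by rw [hk1]; exact Nat.mul_mod_right n _
    have hcasti : ((k % n : ℕ) : ZMod n) = -1 := by
      rw [hi]
      have h4 : ((n - 1 : ℕ) : ZMod n) = (n : ZMod n) - 1 := by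
        push_cast [Nat.cast_sub (by omega : 1 ≤ n)]; ring
      rw [h4, ZMod.natCast_self]; ring
    constructor
    · intro h
      have h1 := congrArg Prod.fst h
      simp only [myCyc, hdiv] at h1
      have h3 : ((k / n : ℕ) : ZMod m) = ((k / n : ℕ) : ZMod m) + 1 := by
        push_cast at h1 ⊢; exact h1
      have h0 : (0 : ZMod m) = 1 := by
        have := congrArg (· - ((k / n : ℕ) : ZMod m)) h3; simpa using this
      exact one_ne_zero h0.symm
    · have hv : myCyc m n r j0 (k + 1)
          = (((k / n + 1 : ℕ) : ZMod m), (r : ZMod n) ^ (k / n + 1) * (j0 + ((0 : ℕ) : ZMod n))) := by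
        simp only [myCyc, hdiv, hmod]
      rw [hv]
      refine Or.inl (Or.inr ⟨?_, ?_⟩)
      · show (r : ZMod n) ^ (k / n) * (j0 + ((k % n : ℕ) : ZMod n))
          = (r : ZMod n) ^ (k / n + 1) * (j0 + ((0 : ℕ) : ZMod n))
        rw [hcasti]
        have h5 : j0 + (-1 : ZMod n) = (r : ZMod n) * j0 := by rw [hj0]; ring
        rw [h5]
        push_cast
        ring
      · show ((k / n + 1 : ℕ) : ZMod m) = ((k / n : ℕ) : ZMod m) + 1
        push_cast; ring

lemma myCyc_shift (hn0 : 0 < n) (j0 : ZMod n) (k : ℕ) :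
    myAlpha m n r (myCyc m n r j0 k) = myCyc m n r j0 (k + n) := by
  simp only [myAlpha, Equiv.coe_fn_mk, myCyc]
  rw [Nat.add_div_right _ hn0, Nat.add_mod_right]
  refine Prod.ext ?_ ?_
  · push_cast; ring
  · simp only []; push_cast; ring

lemma myCyc_inj (hn : 2 ≤ n) {j0 : ZMod n} {k k' : ℕ}
    (hk : k < m * n) (hk' : k' < m * n)
    (h : myCyc m n r j0 k = myCyc m n r j0 k') : k = k' := by
  have hn0 : 0 < n := by omega
  have h1 := congrArg Prod.fst h
  have h2 := congrArg Prod.snd h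
  simp only [myCyc] at h1 h2
  have hdb : k / n < m := (Nat.div_lt_iff_lt_mul hn0).mpr hk
  have hdb' : k' / n < m := (Nat.div_lt_iff_lt_mul hn0).mpr hk'
  have hdiv : k / n = k' / n := by
    have := congrArg ZMod.val h1
    rwa [ZMod.val_cast_of_lt hdb, ZMod.val_cast_of_lt hdb'] at this
  rw [hdiv, ← Units.val_pow_eq_pow_val, Units.mul_right_inj] at h2
  have h3 := add_left_cancel h2
  have hmod : k % n = k' % n := by
    have := congrArg ZMod.val h3
    rwa [ZMod.val_cast_of_lt (Nat.mod_lt _ hn0), ZMod.val_cast_of_lt (Nat.mod_lt _ hn0)] at this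
  have e1 := Nat.div_add_mod k n
  have e2 := Nat.div_add_mod k' n
  rw [hdiv] at e1
  omega

end MyAux

lemma myAlpha_mem {m n : ℕ} (r : (ZMod n)ˣ) (hm : 3 ≤ m) (hord : orderOf r = m) :
    myAlpha m n r ∈ autSubgroup (metaGraph m n r) := by
  haveI : Fact (1 < m) := ⟨by omega⟩
  haveI : NeZero m := ⟨by omega⟩
  have key : ∀ a b : ZMod m × ZMod n,
      (((myAlpha m n r a).1 = (myAlpha m n r b).1 ∧
         (myAlpha m n r b).2 = (myAlpha m n r a).2 + (r : ZMod n) ^ (myAlpha m n r a).1.val) ∨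
       ((myAlpha m n r a).2 = (myAlpha m n r b).2 ∧
         (myAlpha m n r b).1 = (myAlpha m n r a).1 + 1)) ↔
      ((a.1 = b.1 ∧ b.2 = a.2 + (r : ZMod n) ^ a.1.val) ∨ (a.2 = b.2 ∧ b.1 = a.1 + 1)) := by
    intro a b
    simp only [myAlpha, Equiv.coe_fn_mk]
    have hpw : (r : ZMod n) ^ (a.1 + 1).val = (r : ZMod n) * (r : ZMod n) ^ a.1.val := by
      have h1 : (a.1 + 1).val = (a.1.val + 1) % m := by
        rw [ZMod.val_add, ZMod.val_one]
      rw [h1, my_pow_congr r hord (Nat.mod_mod_of_dvd _ dvd_rfl), pow_succ]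
      ring
    refine or_congr (and_congr (add_left_inj 1) ?_) (and_congr (Units.mul_right_inj r) (add_left_inj 1))
    rw [hpw]
    rw [show (r : ZMod n) * a.2 + (r : ZMod n) * (r : ZMod n) ^ a.1.val
        = (r : ZMod n) * (a.2 + (r : ZMod n) ^ a.1.val) by ring]
    exact Units.mul_right_inj r
  intro u v
  simp only [metaGraph, fromRel_adj]
  exact and_congr ((Equiv.injective (myAlpha m n r)).ne_iff) (or_congr (key u v) (key v u))

/-- For integers `m ≥ 3`, `n ≥ 2` and a unit `r ≠ 1` of `ℤ/n` of
multiplicative order `m` with `r - 1` a unit, `κ(X(m,n;r)) ≥ m`. -/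
theorem stmt0 (m n : ℕ) (hm : 3 ≤ m) (hn : 2 ≤ n) (r : (ZMod n)ˣ)
    (hr1 : r ≠ 1) (hord : orderOf r = m) (hru : IsUnit ((r : ZMod n) - 1)) :
    haveI : NeZero m := ⟨by omega⟩
    haveI : NeZero n := ⟨by omega⟩
    m ≤ hamiltonCompression (metaGraph m n r) := by
  haveI : NeZero m := ⟨by omega⟩
  haveI : NeZero n := ⟨by omega⟩
  haveI : Fact (1 < n) := ⟨by omega⟩
  show m ≤ hamiltonCompression (metaGraph m n r)
  have hn0 : 0 < n := by omega
  have hcard : Fintype.card (ZMod m × ZMod n) = m * n := by simp [ZMod.card]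
  haveI : NeZero (Fintype.card (ZMod m × ZMod n)) := ⟨by rw [hcard]; positivity⟩
  obtain ⟨s, hs⟩ := hru
  set j0 : ZMod n := -(((s⁻¹ : (ZMod n)ˣ)) : ZMod n) with hj0def
  have hj0 : (r : ZMod n) * j0 = j0 - 1 := by
    have h1 : ((r : ZMod n) - 1) * j0 = -1 := by
      rw [← hs, hj0def, mul_neg, Units.mul_inv]
    linear_combination h1
  set c : ZMod (Fintype.card (ZMod m × ZMod n)) → ZMod m × ZMod n :=
    fun i => myCyc m n r j0 i.val with hcdef
  have hcnat : ∀ k : ℕ, c ↑k = myCyc m n r j0 k := fun k => by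
    show myCyc m n r j0 ((k : ZMod (Fintype.card (ZMod m × ZMod n)))).val = _
    rw [ZMod.val_natCast, hcard, myCyc_mod r hn0 hord]
  have hrep : ∀ i : ZMod (Fintype.card (ZMod m × ZMod n)),
      ((i.val : ℕ) : ZMod (Fintype.card (ZMod m × ZMod n))) = i :=
    fun i => ZMod.natCast_rightInverse i
  have hham : IsHamCycle (metaGraph m n r) c := by
    constructor
    · rw [Fintype.bijective_iff_injective_and_card]
      refine ⟨?_, ZMod.card _⟩
      intro a b hab
      apply ZMod.val_injective
      refine myCyc_inj (m := m) (j0 := j0) r hn ?_ ?_ hab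
      · rw [← hcard]; exact ZMod.val_lt a
      · rw [← hcard]; exact ZMod.val_lt b
    · intro i
      have e2 : c (i + 1) = myCyc m n r j0 (i.val + 1) := by
        have h : i + 1 = ((i.val + 1 : ℕ) : ZMod (Fintype.card (ZMod m × ZMod n))) := by
          push_cast
          rw [hrep i]
        rw [h, hcnat]
      rw [e2]
      exact myCyc_adj r hm hn hord hj0 i.val
  have hdvd : m ∣ Fintype.card (ZMod m × ZMod n) := by rw [hcard]; exact dvd_mul_right m n
  have hNm : Fintype.card (ZMod m × ZMod n) / m = n := by
    rw [hcard]; exact Nat.mul_div_cancel_left n (by omega)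
  have hsym : IsSymmHamCycle (metaGraph m n r) c m := by
    refine ⟨hdvd, myAlpha m n r, myAlpha_mem r hm hord, ?_⟩
    intro i
    have e2 : c (i + (Fintype.card (ZMod m × ZMod n) / m : ℕ)) = myCyc m n r j0 (i.val + n) := by
      have h : i + ((Fintype.card (ZMod m × ZMod n) / m : ℕ) : ZMod (Fintype.card (ZMod m × ZMod n)))
          = ((i.val + n : ℕ) : ZMod (Fintype.card (ZMod m × ZMod n))) := by
        rw [hNm]
        push_cast
        rw [hrep i]
      rw [h, hcnat]
    rw [e2, ← myCyc_shift r hn0 j0 i.val]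
  unfold hamiltonCompression
  refine le_csSup ?_ ?_
  · refine ⟨Fintype.card (ZMod m × ZMod n), ?_⟩
    rintro k ⟨c', -, hdvd', -⟩
    exact Nat.le_of_dvd (by rw [hcard]; positivity) hdvd'
  · exact ⟨c, hham, hsym⟩
end

section
/- Let n ≥ 3 be an odd integer and let r ≠ 1 be a unit of ℤ/nℤ of multiplicative order 2 such that r − 1 is also a unit of ℤ/nℤ. Then the Hamilton compression of X(2,n;r) satisfies κ(X(2,n;r)) ≥ 2. -/
open SimpleGraph

/-! The hypotheses force `r = -1`: from `r ^ 2 = 1` we get `(r - 1) * (r + 1) = 0`, and `r - 1`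
is a unit. Since `-1` and `1` generate the same edges within a row, `X(2,n;-1)` is the `n`-prism
`X(2,n;1)`. Its rim cycle `(0,0), (0,1), …, (0,n-1), (1,n-1), …, (1,0)` is carried by the
automorphism `(x, j) ↦ (x + 1, -1 - j)` to itself shifted by `n`, so it is `2`-symmetric. -/

theorem eq_neg_one_of_sq_eq_one_of_isUnit_sub_one {R : Type*} [CommRing R] {x : R}
    (hsq : x ^ 2 = 1) (hu : IsUnit (x - 1)) : x = -1 := by
  have : (x - 1) * (x + 1) = (x - 1) * 0 := by linear_combination hsq
  linear_combination hu.mul_left_cancel this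

theorem le_hamiltonCompression {V : Type*} [Fintype V] {X : SimpleGraph V} {N k : ℕ}
    (hN : Fintype.card V = N) {c : ZMod N → V} (hbij : Function.Bijective c)
    (hadj : ∀ i, X.Adj (c i) (c (i + 1))) (hk : k ∣ N) {α : Equiv.Perm V}
    (hα : α ∈ autSubgroup X) (hshift : ∀ i, α (c i) = c (i + (N / k : ℕ))) :
    k ≤ hamiltonCompression X := by
  subst hN
  refine le_csSup ⟨Fintype.card V, ?_⟩ ⟨c, ⟨hbij, hadj⟩, hk, α, hα, hshift⟩
  rintro k' ⟨-, -, hk', -⟩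
  exact Nat.le_of_dvd (Fintype.card_pos_iff.mpr ⟨c 0⟩) hk'

theorem ZMod.two_eq_zero_or_one (x : ZMod 2) : x = 0 ∨ x = 1 := by
  revert x; decide

theorem metaGraph_two_eq_one_of_eq_neg_one {n : ℕ} {r : (ZMod n)ˣ} (hr : (r : ZMod n) = -1) :
    metaGraph 2 n r = metaGraph 2 n 1 := by
  ext ⟨x, i⟩ ⟨y, j⟩
  simp only [metaGraph, fromRel_adj, hr, Units.val_one, one_pow]
  rcases x.two_eq_zero_or_one with rfl | rfl <;> rcases y.two_eq_zero_or_one with rfl | rfl <;>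
    simp [ZMod.val_one]
  grind

theorem metaGraph_one_adj {m n : ℕ} {u v : ZMod m × ZMod n} :
    (metaGraph m n 1).Adj u v ↔ u ≠ v ∧
      ((u.1 = v.1 ∧ (v.2 = u.2 + 1 ∨ u.2 = v.2 + 1)) ∨
        (u.2 = v.2 ∧ (v.1 = u.1 + 1 ∨ u.1 = v.1 + 1))) := by
  simp only [metaGraph, fromRel_adj, Units.val_one, one_pow]
  grind

def torusFlip (m n : ℕ) : Equiv.Perm (ZMod m × ZMod n) :=
  (Equiv.addLeft 1).prodCongr (Equiv.subLeft (-1))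

@[simp]
theorem torusFlip_apply {m n : ℕ} (u : ZMod m × ZMod n) :
    torusFlip m n u = (1 + u.1, -1 - u.2) :=
  rfl

theorem torusFlip_mem_autSubgroup {m n : ℕ} : torusFlip m n ∈ autSubgroup (metaGraph m n 1) := by
  intro u v
  simp only [metaGraph_one_adj, ne_eq, torusFlip_apply]
  grind

section Prism

variable {n : ℕ} [NeZero n]

variable (n) in
def prismCycle (i : ZMod (2 * n)) : ZMod 2 × ZMod n :=
  if i.val < n then (0, i.val) else (1, -1 - i.val)

theorem ZMod.val_add_half (i : ZMod (2 * n)) :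
    (i + n).val = if i.val < n then i.val + n else i.val - n := by
  have hi := ZMod.val_lt i
  rw [ZMod.val_add, ZMod.val_cast_of_lt (by omega : n < 2 * n)]
  split_ifs with h
  · exact Nat.mod_eq_of_lt (by omega)
  · rw [Nat.mod_eq_sub_mod (by omega), Nat.mod_eq_of_lt (by omega)]
    omega

theorem torusFlip_prismCycle (i : ZMod (2 * n)) :
    torusFlip 2 n (prismCycle n i) = prismCycle n (i + n) := by
  have hi := ZMod.val_lt i
  unfold prismCycle
  rw [ZMod.val_add_half]
  split_ifs with h h' h' <;> try omega
  · simp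
  · simp [Nat.cast_sub (by omega : n ≤ i.val)]
    decide

theorem prismCycle_natCast_val (j : ZMod n) : prismCycle n (j.val : ZMod (2 * n)) = (0, j) := by
  have := ZMod.val_lt j
  rw [prismCycle, ZMod.val_cast_of_lt (by omega), if_pos this, ZMod.natCast_zmod_val]

theorem prismCycle_surjective : Function.Surjective (prismCycle n) := by
  rintro ⟨x, j⟩
  rcases x.two_eq_zero_or_one with rfl | rfl
  · exact ⟨_, prismCycle_natCast_val j⟩
  · refine ⟨((-1 - j).val : ZMod (2 * n)) + n, ?_⟩
    rw [← torusFlip_prismCycle, prismCycle_natCast_val]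
    simp

theorem prismCycle_bijective : Function.Bijective (prismCycle n) := by
  rw [Fintype.bijective_iff_surjective_and_card]
  exact ⟨prismCycle_surjective, by simp [ZMod.card]⟩

theorem prismCycle_adj_of_val_lt {i : ZMod (2 * n)} (hi : i.val < n) :
    (metaGraph 2 n 1).Adj (prismCycle n i) (prismCycle n (i + 1)) := by
  have hval : (i + 1).val = i.val + 1 := by
    rw [ZMod.val_add, ZMod.val_one_eq_one_mod, Nat.add_mod_mod, Nat.mod_eq_of_lt (by omega)]
  have hne : prismCycle n i ≠ prismCycle n (i + 1) := by
    rw [prismCycle_bijective.injective.ne_iff]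
    intro h
    have := congrArg ZMod.val h
    omega
  rw [metaGraph_one_adj]
  refine ⟨hne, ?_⟩
  unfold prismCycle
  rw [if_pos hi, hval]
  split_ifs with h
  · simp
  · have : i.val = n - 1 := by omega
    simp [this, Nat.cast_sub NeZero.one_le]

theorem prismCycle_adj (i : ZMod (2 * n)) :
    (metaGraph 2 n 1).Adj (prismCycle n i) (prismCycle n (i + 1)) := by
  by_cases hi : i.val < n
  · exact prismCycle_adj_of_val_lt hi
  -- the second half of the cycle is the flip of the first
  obtain ⟨k, hk, rfl⟩ : ∃ k : ZMod (2 * n), k.val < n ∧ i = k + n := by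
    refine ⟨i + n, ?_, ?_⟩
    · rw [ZMod.val_add_half, if_neg hi]
      have := ZMod.val_lt i
      omega
    · rw [add_assoc, ← Nat.cast_add, ← two_mul, ZMod.natCast_self, add_zero]
  rw [add_right_comm, ← torusFlip_prismCycle, ← torusFlip_prismCycle]
  exact (torusFlip_mem_autSubgroup _ _).mpr (prismCycle_adj_of_val_lt hk)

variable (n) in
theorem two_le_hamiltonCompression_prism : 2 ≤ hamiltonCompression (metaGraph 2 n 1) :=
  le_hamiltonCompression (by simp [ZMod.card]) prismCycle_bijective prismCycle_adj
    (dvd_mul_right 2 n) torusFlip_mem_autSubgroup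
    fun i => by rw [Nat.mul_div_cancel_left n two_pos]; exact torusFlip_prismCycle i

end Prism

/-- For odd `n ≥ 3` and a unit `r ≠ 1` of `ℤ/n` of multiplicative
order `2` with `r - 1` a unit, `κ(X(2,n;r)) ≥ 2`. -/
theorem stmt1 (n : ℕ) (hn : 3 ≤ n) (r : (ZMod n)ˣ)
    (hord : orderOf r = 2) (hru : IsUnit ((r : ZMod n) - 1)) :
    haveI : NeZero n := ⟨by omega⟩
    2 ≤ hamiltonCompression (metaGraph 2 n r) := by
  have : NeZero n := ⟨by omega⟩
  have hsq : (r : ZMod n) ^ 2 = 1 := by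
    rw [← Units.val_pow_eq_pow_val, ← hord, pow_orderOf_eq_one, Units.val_one]
  rw [metaGraph_two_eq_one_of_eq_neg_one (eq_neg_one_of_sq_eq_one_of_isUnit_sub_one hsq hru)]
  exact two_le_hamiltonCompression_prism n
end

section
/- Let k ≥ 2 be an integer and p a prime with p ≡ 1 (mod k), and let r be a unit of ℤ/pℤ of multiplicative order k. Then the Hamilton compression of X(k,p;r) is exactly k, i.e., κ(X(k,p;r)) = k. -/
open SimpleGraph

namespace Stmt3Aux

open Pointwise

/-! ### Basic adjacency lemmas -/

section Adj

variable {k p : ℕ} {r : (ZMod p)ˣ}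

lemma meta_adj_iff {u v : ZMod k × ZMod p} :
    (metaGraph k p r).Adj u v ↔ u ≠ v ∧
      ((u.1 = v.1 ∧ v.2 = u.2 + (r : ZMod p) ^ u.1.val) ∨ (u.2 = v.2 ∧ v.1 = u.1 + 1) ∨
       (v.1 = u.1 ∧ u.2 = v.2 + (r : ZMod p) ^ v.1.val) ∨ (v.2 = u.2 ∧ u.1 = v.1 + 1)) := by
  rw [metaGraph, SimpleGraph.fromRel_adj]
  tauto

lemma adj_fst_or_snd {u v : ZMod k × ZMod p} (h : (metaGraph k p r).Adj u v) :
    u.1 = v.1 ∨ u.2 = v.2 := by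
  rcases (meta_adj_iff.1 h).2 with ⟨h1, _⟩ | ⟨h1, _⟩ | ⟨h1, _⟩ | ⟨h1, _⟩
  · exact Or.inl h1
  · exact Or.inr h1
  · exact Or.inl h1.symm
  · exact Or.inr h1.symm

variable (hk : 2 ≤ k) (hpp : p.Prime)

include hk in
lemma one_ne_zero_zmodk : (1 : ZMod k) ≠ 0 := by
  intro h
  have h1 : ((1 : ℕ) : ZMod k) = 0 := by simpa using h
  have h2 : k ∣ 1 := (ZMod.natCast_eq_zero_iff 1 k).1 h1
  have := Nat.le_of_dvd one_pos h2
  omega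

include hpp in
lemma rpow_ne_zero (m : ℕ) : ((r : ZMod p) ^ m) ≠ 0 := by
  haveI : Fact p.Prime := ⟨hpp⟩
  exact pow_ne_zero _ (r.ne_zero)

include hpp in
lemma adj_horiz (i : ZMod k) (x : ZMod p) :
    (metaGraph k p r).Adj (i, x) (i, x + (r : ZMod p) ^ i.val) := by
  refine meta_adj_iff.2 ⟨?_, Or.inl ⟨rfl, rfl⟩⟩
  intro h
  have h2 := congrArg Prod.snd h
  simp only at h2
  have : ((r : ZMod p) ^ i.val) = 0 := by
    have := congrArg (fun y => y - x) h2
    simpa using this.symm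
  exact rpow_ne_zero hpp _ this

include hk in
lemma adj_vert (i : ZMod k) (x : ZMod p) :
    (metaGraph k p r).Adj (i, x) (i + 1, x) := by
  refine meta_adj_iff.2 ⟨?_, Or.inr (Or.inl ⟨rfl, rfl⟩)⟩
  intro h
  have h1 := congrArg Prod.fst h
  simp only at h1
  have : (1 : ZMod k) = 0 := by
    have := congrArg (fun y => y - i) h1
    simpa using this.symm
  exact one_ne_zero_zmodk hk this

/-- Neighbours of `u` are among an explicit 4-element Finset. -/
def nbrs (r : (ZMod p)ˣ) (u : ZMod k × ZMod p) : Finset (ZMod k × ZMod p) :=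
  {(u.1, u.2 + (r : ZMod p) ^ u.1.val), (u.1, u.2 - (r : ZMod p) ^ u.1.val),
   (u.1 + 1, u.2), (u.1 - 1, u.2)}

lemma mem_nbrs_of_adj {u v : ZMod k × ZMod p} (h : (metaGraph k p r).Adj u v) :
    v ∈ nbrs r u := by
  obtain ⟨i, x⟩ := u
  obtain ⟨i', x'⟩ := v
  simp only [nbrs, Finset.mem_insert, Finset.mem_singleton]
  rcases (meta_adj_iff.1 h).2 with ⟨h1, h2⟩ | ⟨h1, h2⟩ | ⟨h1, h2⟩ | ⟨h1, h2⟩ <;>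
      simp only at h1 h2
  · subst h1; subst h2; exact Or.inl rfl
  · subst h1; subst h2; exact Or.inr (Or.inr (Or.inl rfl))
  · subst h1
    refine Or.inr (Or.inl ?_)
    have : x' = x - (r : ZMod p) ^ i'.val := by rw [h2]; ring
    rw [this]
  · subst h1
    refine Or.inr (Or.inr (Or.inr ?_))
    rw [h2]
    have : i' + 1 - 1 = i' := by ring
    rw [this]

lemma card_nbrs_le (u : ZMod k × ZMod p) :
    (nbrs r u).card ≤ 4 := by
  unfold nbrs
  refine le_trans (Finset.card_insert_le _ _) (Nat.succ_le_succ ?_)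
  refine le_trans (Finset.card_insert_le _ _) (Nat.succ_le_succ ?_)
  refine le_trans (Finset.card_insert_le _ _) (Nat.succ_le_succ ?_)
  simp

end Adj

lemma mem_autSubgroup_iff {V : Type*} {X : SimpleGraph V} {σ : Equiv.Perm V} :
    σ ∈ autSubgroup X ↔ ∀ u v : V, X.Adj (σ u) (σ v) ↔ X.Adj u v := Iff.rfl

/-! ### Connectivity -/

section Conn

variable {k p : ℕ} {r : (ZMod p)ˣ} [NeZero k] [NeZero p]

lemma reach_horiz (hpp : p.Prime) (i : ZMod k) (x : ZMod p) (n : ℕ) :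
    (metaGraph k p r).Reachable (i, x) (i, x + (n : ZMod p) * (r : ZMod p) ^ i.val) := by
  induction n with
  | zero => exact by simpa using Reachable.refl ((i, x) : ZMod k × ZMod p)
  | succ n ih =>
      refine ih.trans (Adj.reachable ?_)
      have h := adj_horiz (k := k) (r := r) hpp i (x + (n : ZMod p) * (r : ZMod p) ^ i.val)
      have he : x + (n : ZMod p) * (r : ZMod p) ^ i.val + (r : ZMod p) ^ i.val
          = x + ((n : ℕ) + 1 : ZMod p) * (r : ZMod p) ^ i.val := by ring
      rw [he] at h
      have : (((n + 1 : ℕ)) : ZMod p) = ((n : ℕ) + 1 : ZMod p) := by push_cast; ring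
      rw [this]
      exact h

lemma reach_layer (hpp : p.Prime) (i : ZMod k) (x y : ZMod p) :
    (metaGraph k p r).Reachable (i, x) (i, y) := by
  haveI : Fact p.Prime := ⟨hpp⟩
  have h := reach_horiz (r := r) hpp i x (((y - x) * ((r : ZMod p) ^ i.val)⁻¹).val)
  have he : x + ((((y - x) * ((r : ZMod p) ^ i.val)⁻¹).val : ℕ) : ZMod p)
      * (r : ZMod p) ^ i.val = y := by
    rw [ZMod.natCast_rightInverse _]
    rw [mul_assoc, inv_mul_cancel₀ (rpow_ne_zero hpp _)]
    ring
  rwa [he] at h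

lemma reach_down (hk : 2 ≤ k) (x : ZMod p) (n : ℕ) :
    (metaGraph k p r).Reachable ((n : ZMod k), x) (0, x) := by
  induction n with
  | zero => exact by simpa using Reachable.refl (((0 : ZMod k), x) : ZMod k × ZMod p)
  | succ n ih =>
      refine (Adj.reachable ?_).trans ih
      have h := adj_vert (p := p) (r := r) hk (n : ZMod k) x
      have : (((n + 1 : ℕ)) : ZMod k) = ((n : ℕ) + 1 : ZMod k) := by push_cast; ring
      rw [this]
      exact h.symm

lemma meta_preconnected (hk : 2 ≤ k) (hpp : p.Prime) :
    (metaGraph k p r).Preconnected := by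
  have key : ∀ u : ZMod k × ZMod p, (metaGraph k p r).Reachable u (0, 0) := by
    rintro ⟨i, x⟩
    have h1 : (metaGraph k p r).Reachable (i, x) (0, x) := by
      have := reach_down (p := p) (r := r) hk x i.val
      rwa [ZMod.natCast_rightInverse i] at this
    exact h1.trans (reach_layer hpp 0 x 0)
  intro u v
  exact (key u).trans (key v).symm

end Conn

/-! ### Order-p automorphisms with a fixed point are trivial -/

section FixPt

variable {k p : ℕ} {r : (ZMod p)ˣ} [NeZero k] [NeZero p]

lemma pow_fix {V : Type*} (σ : Equiv.Perm V) {u : V} (hu : σ u = u) (m : ℕ) :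
    (σ ^ m) u = u := by
  induction m with
  | zero => rfl
  | succ m ih => rw [pow_succ, Equiv.Perm.mul_apply, hu, ih]

lemma fix_adj_fix (hpp : p.Prime) (hp5 : 5 ≤ p)
    {σ : Equiv.Perm (ZMod k × ZMod p)} (hσ : σ ∈ autSubgroup (metaGraph k p r))
    (hσp : σ ^ p = 1) {u w : ZMod k × ZMod p} (hu : σ u = u)
    (hadj : (metaGraph k p r).Adj u w) : σ w = w := by
  have hmem : ∀ m : ℕ, (σ ^ m) w ∈ nbrs r u := by
    intro m
    have hpm : σ ^ m ∈ autSubgroup (metaGraph k p r) := pow_mem hσ m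
    have := (mem_autSubgroup_iff.1 hpm u w).2 hadj
    rw [pow_fix σ hu m] at this
    exact mem_nbrs_of_adj this
  have hper : Function.IsPeriodicPt σ p w := by
    show σ^[p] w = w
    rw [Equiv.Perm.iterate_eq_pow, hσp]
    rfl
  have ht := hper.minimalPeriod_dvd
  rcases (Nat.Prime.eq_one_or_self_of_dvd hpp _ ht) with h1 | hpeq
  · exact Function.minimalPeriod_eq_one_iff_isFixedPt.1 h1
  · exfalso
    have hinj5 : Set.InjOn (fun m => (σ ^ m) w) ↑(Finset.range 5) := by
      intro a ha b hb hab
      simp only [Finset.coe_range, Set.mem_Iio] at ha hb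
      exact Function.iterate_injOn_Iio_minimalPeriod (f := ⇑σ) (x := w)
        (Set.mem_Iio.2 (by rw [hpeq]; exact lt_of_lt_of_le ha hp5))
        (Set.mem_Iio.2 (by rw [hpeq]; exact lt_of_lt_of_le hb hp5))
        (by simpa [Equiv.Perm.iterate_eq_pow] using hab)
    have hcard : ((Finset.range 5).image (fun m => (σ ^ m) w)).card = 5 := by
      rw [Finset.card_image_of_injOn hinj5, Finset.card_range]
    have hsub : (Finset.range 5).image (fun m => (σ ^ m) w) ⊆ nbrs r u := by
      intro x hx
      simp only [Finset.mem_image] at hx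
      obtain ⟨m, _, rfl⟩ := hx
      exact hmem m
    have := Finset.card_le_card hsub
    rw [hcard] at this
    have := le_trans this (card_nbrs_le u)
    omega

lemma fixpt_imp_id_of_5le (hk : 2 ≤ k) (hpp : p.Prime) (hp5 : 5 ≤ p)
    {σ : Equiv.Perm (ZMod k × ZMod p)} (hσ : σ ∈ autSubgroup (metaGraph k p r))
    (hσp : σ ^ p = 1) {v : ZMod k × ZMod p} (hv : σ v = v) : σ = 1 := by
  have walkfix : ∀ (a b : ZMod k × ZMod p) (w : (metaGraph k p r).Walk a b),
      σ a = a → σ b = b := by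
    intro a b w
    induction w with
    | nil => exact fun h => h
    | cons hadj _ ih => exact fun ha => ih (fix_adj_fix hpp hp5 hσ hσp ha hadj)
  refine Equiv.ext fun x => ?_
  obtain ⟨w⟩ := meta_preconnected (r := r) hk hpp v x
  exact walkfix v x w hv

end FixPt

/-! ### The exceptional case `p = 3`, `k = 2` -/

instance : DecidableRel (metaGraph 2 3 (-1)).Adj := fun a b =>
  decidable_of_iff' _ (SimpleGraph.fromRel_adj _ a b)

set_option maxRecDepth 10000 in
lemma lemA3 : ∀ σ : Equiv.Perm (ZMod 2 × ZMod 3),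
    (∀ u v, (metaGraph 2 3 (-1)).Adj (σ u) (σ v) ↔ (metaGraph 2 3 (-1)).Adj u v) →
    (∀ x, σ (σ (σ x)) = x) → ∀ v, σ v = v → ∀ x, σ x = x := by decide

section Wrap

variable {k p : ℕ} {r : (ZMod p)ˣ}

lemma p_facts (hk : 2 ≤ k) (hpp : p.Prime) (hmod : p ≡ 1 [MOD k]) :
    k ∣ p - 1 ∧ 2 < p ∧ k < p := by
  have hdvd : k ∣ p - 1 := (Nat.modEq_iff_dvd' hpp.one_le).mp hmod.symm
  have hp2 : p ≠ 2 := by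
    rintro rfl
    have := Nat.le_of_dvd (by norm_num) hdvd
    omega
  have h2 : 2 < p := by
    have := hpp.two_le
    omega
  have hkp : k < p := by
    have := Nat.le_of_dvd (by omega) hdvd
    omega
  exact ⟨hdvd, h2, hkp⟩

/-- Any automorphism of `X(k,p;r)` satisfying `σ^p = 1` with a fixed point is trivial. -/
lemma fixpt_imp_id (hk : 2 ≤ k) (hpp : p.Prime) (hmod : p ≡ 1 [MOD k])
    (hord : orderOf r = k)
    {σ : Equiv.Perm (ZMod k × ZMod p)} (hσ : σ ∈ autSubgroup (metaGraph k p r))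
    (hσp : σ ^ p = 1) {v : ZMod k × ZMod p} (hv : σ v = v) : σ = 1 := by
  haveI : NeZero k := ⟨by omega⟩
  haveI : NeZero p := ⟨hpp.ne_zero⟩
  obtain ⟨hdvd, hp2, hkp⟩ := p_facts hk hpp hmod
  rcases (by omega : p = 3 ∨ 4 ≤ p) with hp3 | hp4
  · -- p = 3, k = 2, r = -1.
    subst hp3
    have hk2 : k = 2 := by
      have := Nat.le_of_dvd (by norm_num) hdvd
      omega
    subst hk2
    have hr : r = -1 := by
      have hall : ∀ u : (ZMod 3)ˣ, u = 1 ∨ u = -1 := by decide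
      rcases hall r with h1 | h1
      · rw [h1] at hord; simp at hord
      · exact h1
    subst hr
    have hcube : ∀ x, σ (σ (σ x)) = x := by
      intro x
      have hx : (σ ^ 3) x = x := by rw [hσp]; rfl
      have e : σ ^ 3 = σ ^ 2 * σ := pow_succ σ 2
      have e2 : σ ^ 2 = σ ^ 1 * σ := pow_succ σ 1
      rw [e, e2, pow_one] at hx
      simpa [Equiv.Perm.mul_apply] using hx
    exact Equiv.ext (lemA3 σ (fun u w => mem_autSubgroup_iff.1 hσ u w) hcube v hv)
  · have hp5 : 5 ≤ p := by
      rcases (by omega : p = 4 ∨ 5 ≤ p) with h4 | h5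
      · exfalso; rw [h4] at hpp; norm_num at hpp
      · exact h5
    exact fixpt_imp_id_of_5le hk hpp hp5 hσ hσp hv

end Wrap

/-! ### Conjugating an order-`p` automorphism to a power of `rho` -/

section Conj

variable {k p : ℕ} {r : (ZMod p)ˣ}

/-- The vertical translation `(i,j) ↦ (i, j+1)`. -/
def rho (k p : ℕ) : Equiv.Perm (ZMod k × ZMod p) where
  toFun := fun w => (w.1, w.2 + 1)
  invFun := fun w => (w.1, w.2 - 1)
  left_inv := by rintro ⟨i, x⟩; simp
  right_inv := by rintro ⟨i, x⟩; simp

lemma rho_apply (w : ZMod k × ZMod p) : rho k p w = (w.1, w.2 + 1) := rfl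

lemma rho_pow_apply (n : ℕ) (w : ZMod k × ZMod p) :
    ((rho k p) ^ n) w = (w.1, w.2 + (n : ZMod p)) := by
  induction n with
  | zero => simp
  | succ n ih =>
      rw [pow_succ', Equiv.Perm.mul_apply, rho_apply, ih]
      simp only [Prod.mk.injEq, true_and]
      push_cast
      ring

lemma rho_mem : rho k p ∈ autSubgroup (metaGraph k p r) := by
  rw [mem_autSubgroup_iff]
  rintro ⟨a, b⟩ ⟨c, d⟩
  rw [meta_adj_iff, meta_adj_iff]
  simp only [rho, Equiv.coe_fn_mk, ne_eq, Prod.mk.injEq]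
  constructor
  · rintro ⟨hne, hrel⟩
    refine ⟨fun h => hne ⟨h.1, by rw [h.2]⟩, ?_⟩
    rcases hrel with ⟨h1, h2⟩ | ⟨h1, h2⟩ | ⟨h1, h2⟩ | ⟨h1, h2⟩
    · exact Or.inl ⟨h1, by linear_combination h2⟩
    · exact Or.inr (Or.inl ⟨by linear_combination h1, h2⟩)
    · exact Or.inr (Or.inr (Or.inl ⟨h1, by linear_combination h2⟩))
    · exact Or.inr (Or.inr (Or.inr ⟨by linear_combination h1, h2⟩))
  · rintro ⟨hne, hrel⟩
    refine ⟨fun h => hne ⟨h.1, by linear_combination h.2⟩, ?_⟩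
    rcases hrel with ⟨h1, h2⟩ | ⟨h1, h2⟩ | ⟨h1, h2⟩ | ⟨h1, h2⟩
    · exact Or.inl ⟨h1, by linear_combination h2⟩
    · exact Or.inr (Or.inl ⟨by linear_combination h1, h2⟩)
    · exact Or.inr (Or.inr (Or.inl ⟨h1, by linear_combination h2⟩))
    · exact Or.inr (Or.inr (Or.inr ⟨by linear_combination h1, h2⟩))

lemma rho_orderOf (hpp : p.Prime) : orderOf (rho k p) = p := by
  haveI : Fact p.Prime := ⟨hpp⟩
  haveI : NeZero p := ⟨hpp.ne_zero⟩
  refine orderOf_eq_prime ?_ ?_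
  · refine Equiv.ext fun w => ?_
    rw [rho_pow_apply]
    simp [ZMod.natCast_self]
  · intro h
    have h2 := congrArg
      (fun σ : Equiv.Perm (ZMod k × ZMod p) => (σ ((0 : ZMod k), (0 : ZMod p))).2) h
    simp only [rho_apply, Equiv.Perm.coe_one, id_eq] at h2
    exact one_ne_zero_zmodk hpp.two_le (by simpa using h2)

/-- Every automorphism of order `p` is conjugate (inside the automorphism group)
to a nontrivial power of `rho`. -/
lemma conj_to_rho (hk : 2 ≤ k) (hpp : p.Prime) (hmod : p ≡ 1 [MOD k])
    (hord : orderOf r = k) {β : Equiv.Perm (ZMod k × ZMod p)}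
    (hβ : β ∈ autSubgroup (metaGraph k p r)) (hβp : β ^ p = 1) (hβ1 : β ≠ 1) :
    ∃ (g : Equiv.Perm (ZMod k × ZMod p)) (n : ℕ), g ∈ autSubgroup (metaGraph k p r) ∧
      ((n : ZMod p) ≠ 0) ∧ β = g * (rho k p) ^ n * g⁻¹ := by
  haveI : Fact p.Prime := ⟨hpp⟩
  haveI : NeZero k := ⟨by omega⟩
  haveI : NeZero p := ⟨hpp.ne_zero⟩
  obtain ⟨hdvd, hp2, hkp⟩ := p_facts hk hpp hmod
  set A := autSubgroup (metaGraph k p r) with hA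
  let β' : A := ⟨β, hβ⟩
  let ρ' : A := ⟨rho k p, rho_mem⟩
  have hcoeord : ∀ x : A, orderOf (x : Equiv.Perm (ZMod k × ZMod p)) = orderOf x := by
    intro x
    exact orderOf_injective A.subtype A.subtype_injective x
  have hordβ' : orderOf β' = p := by
    rw [← hcoeord β']
    exact orderOf_eq_prime hβp hβ1
  have hordρ' : orderOf ρ' = p := by
    rw [← hcoeord ρ']
    exact rho_orderOf hpp
  -- every Sylow p-subgroup containing an element of order p has cardinality exactly p
  have main : ∀ (x : A), orderOf x = p → ∀ Q : Sylow p A,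
      Subgroup.zpowers x ≤ Q.toSubgroup → Q.toSubgroup = Subgroup.zpowers x := by
    intro x hx Q hQ
    obtain ⟨n, hn⟩ := IsPGroup.iff_card.mp Q.isPGroup'
    have hcardzp : Nat.card (Subgroup.zpowers x) = p := by
      rw [Nat.card_zpowers, hx]
    have hple : p ≤ Nat.card Q.toSubgroup := by
      have h := Subgroup.card_le_of_le hQ
      rwa [hcardzp] at h
    have hn1 : n = 1 := by
      rcases Nat.lt_or_ge n 2 with h2 | h2
      · interval_cases n
        · exfalso; rw [hn] at hple; simp at hple; omega
        · rfl
      · -- n ≥ 2 : pigeonhole gives a nontrivial automorphism with a fixed point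
        exfalso
        have hbig : Fintype.card (ZMod k × ZMod p) < Nat.card Q.toSubgroup := by
          rw [hn, Fintype.card_prod, ZMod.card, ZMod.card]
          calc k * p < p * p := by
                have : 0 < p := hpp.pos
                exact Nat.mul_lt_mul_of_lt_of_le hkp (le_refl p) this
            _ = p ^ 2 := by ring
            _ ≤ p ^ n := Nat.pow_le_pow_right hpp.pos h2
        haveI : Fintype (Q.toSubgroup) := Fintype.ofFinite _
        rw [Nat.card_eq_fintype_card] at hbig
        set v₀ : ZMod k × ZMod p := ((0 : ZMod k), (0 : ZMod p)) with hv₀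
        obtain ⟨σ, τ, hne, heq⟩ := Fintype.exists_ne_map_eq_of_card_lt
          (fun σ : Q.toSubgroup => ((σ : A) : Equiv.Perm (ZMod k × ZMod p)) v₀) hbig
        set δ : Equiv.Perm (ZMod k × ZMod p) :=
          (((τ⁻¹ * σ : Q.toSubgroup) : A) : Equiv.Perm (ZMod k × ZMod p)) with hδ
        have hδA : δ ∈ A := ((τ⁻¹ * σ : Q.toSubgroup) : A).2
        have hcoe : δ = (((τ : A) : Equiv.Perm (ZMod k × ZMod p)))⁻¹
            * (((σ : A) : Equiv.Perm (ZMod k × ZMod p))) := by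
          simp [hδ]
        have hδfix : δ v₀ = v₀ := by
          rw [hcoe, Equiv.Perm.mul_apply, heq]
          exact Equiv.symm_apply_apply _ _
        have hδ1 : δ ≠ 1 := by
          intro h
          apply hne
          have h1 : (τ⁻¹ * σ : Q.toSubgroup) = 1 := by
            apply Subtype.ext; apply Subtype.ext; exact h
          have h2 := congrArg (fun z => τ * z) h1
          simpa [← mul_assoc] using h2
        have hδpow : δ ^ (p ^ n) = 1 := by
          have h1 : (τ⁻¹ * σ : Q.toSubgroup) ^ (p ^ n) = 1 := by
            rw [← hn]; exact pow_card_eq_one'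
          have := congrArg (fun z : Q.toSubgroup => ((z : A) : Equiv.Perm (ZMod k × ZMod p))) h1
          simpa [hcoe] using this
        obtain ⟨m, hmle, hm⟩ := (Nat.dvd_prime_pow hpp).mp (orderOf_dvd_of_pow_eq_one hδpow)
        have hm1 : 1 ≤ m := by
          rcases Nat.eq_zero_or_pos m with h0 | h1
          · exfalso; rw [h0, pow_zero] at hm
            exact hδ1 (orderOf_eq_one_iff.mp hm)
          · exact h1
        set σ' : Equiv.Perm (ZMod k × ZMod p) := δ ^ (p ^ (m - 1)) with hσ'
        have hσ'p : σ' ^ p = 1 := by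
          rw [hσ', ← pow_mul, ← pow_succ, Nat.sub_add_cancel hm1, ← hm]
          exact pow_orderOf_eq_one δ
        have hσ'fix : σ' v₀ = v₀ := pow_fix δ hδfix _
        have hσ'A : σ' ∈ A := pow_mem hδA _
        have hσ'1 : σ' ≠ 1 := by
          intro h
          have hdvd2 : orderOf δ ∣ p ^ (m - 1) := orderOf_dvd_of_pow_eq_one h
          rw [hm] at hdvd2
          have := Nat.le_of_dvd (Nat.pow_pos hpp.pos) hdvd2
          have hlt : p ^ (m - 1) < p ^ m :=
            Nat.pow_lt_pow_right hpp.one_lt (by omega)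
          omega
        exact hσ'1 (fixpt_imp_id hk hpp hmod hord hσ'A hσ'p hσ'fix)
    refine (Subgroup.eq_of_le_of_card_ge hQ ?_).symm
    rw [hn, hn1, pow_one, hcardzp]
  obtain ⟨Qβ, hQβ⟩ := IsPGroup.exists_le_sylow (P := Subgroup.zpowers β')
    ((IsPGroup.iff_card (p := p) (G := ↥(Subgroup.zpowers β'))).2
      ⟨1, by rw [Nat.card_zpowers, hordβ', pow_one]⟩)
  obtain ⟨Qρ, hQρ⟩ := IsPGroup.exists_le_sylow (P := Subgroup.zpowers ρ')
    ((IsPGroup.iff_card (p := p) (G := ↥(Subgroup.zpowers ρ'))).2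
      ⟨1, by rw [Nat.card_zpowers, hordρ', pow_one]⟩)
  have hQβ' := main β' hordβ' Qβ hQβ
  have hQρ' := main ρ' hordρ' Qρ hQρ
  obtain ⟨γ, hγ⟩ := MulAction.exists_smul_eq A Qρ Qβ
  have hmem : β' ∈ (Qβ : Subgroup A) := hQβ (Subgroup.mem_zpowers β')
  rw [← hγ] at hmem
  have hmem2 : γ⁻¹ * β' * γ ∈ (Qρ : Subgroup A) := by
    have h1 : ((γ • Qρ : Sylow p A) : Subgroup A) = MulAut.conj γ • (Qρ : Subgroup A) := rfl
    rw [h1, Subgroup.mem_pointwise_smul_iff_inv_smul_mem] at hmem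
    simpa [MulAut.conj_inv_apply] using hmem
  rw [hQρ'] at hmem2
  obtain ⟨z, hz⟩ := Subgroup.mem_zpowers_iff.mp hmem2
  set n : ℕ := (z % (p : ℤ)).toNat with hnn
  have hzn : ρ' ^ n = γ⁻¹ * β' * γ := by
    have hzmod := zpow_mod_orderOf ρ' z
    rw [hordρ'] at hzmod
    rw [← hz, ← zpow_natCast, hnn, Int.toNat_of_nonneg (Int.emod_nonneg z (by exact_mod_cast
      hpp.ne_zero))]
    exact hzmod
  have hβeq : β' = γ * ρ' ^ n * γ⁻¹ := by
    rw [hzn]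
    group
  have hnne : (n : ZMod p) ≠ 0 := by
    intro h0
    have hdvdn : p ∣ n := (ZMod.natCast_eq_zero_iff n p).1 h0
    have : ρ' ^ n = 1 := orderOf_dvd_iff_pow_eq_one.mp (by rw [hordρ']; exact hdvdn)
    rw [this, mul_one, mul_inv_cancel] at hβeq
    apply hβ1
    have := congrArg (fun x : A => (x : Equiv.Perm (ZMod k × ZMod p))) hβeq
    exact this
  refine ⟨(γ : Equiv.Perm (ZMod k × ZMod p)), n, γ.2, hnne, ?_⟩
  have := congrArg (fun x : A => (x : Equiv.Perm (ZMod k × ZMod p))) hβeq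
  simpa using this

end Conj

/-! ### The upper bound -/

section Upper

variable {k p : ℕ} {r : (ZMod p)ˣ}

lemma card_V (k p : ℕ) [NeZero k] [NeZero p] : Fintype.card (ZMod k × ZMod p) = k * p := by
  rw [Fintype.card_prod, ZMod.card, ZMod.card]

lemma shift_pow {V : Type*} [Fintype V] {c : ZMod (Fintype.card V) → V}
    {α : Equiv.Perm V} {d : ℕ}
    (hα : ∀ i, α (c i) = c (i + ((d : ℕ) : ZMod (Fintype.card V)))) :
    ∀ (m : ℕ) (i), (α ^ m) (c i) = c (i + ((m * d : ℕ) : ZMod (Fintype.card V))) := by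
  intro m
  induction m with
  | zero => intro i; simp
  | succ m ih =>
      intro i
      rw [pow_succ', Equiv.Perm.mul_apply, ih, hα]
      congr 1
      push_cast
      ring

lemma upper_bound [NeZero k] [NeZero p] (hk : 2 ≤ k) (hpp : p.Prime)
    (hmod : p ≡ 1 [MOD k]) (hord : orderOf r = k) {k' : ℕ}
    {c : ZMod (Fintype.card (ZMod k × ZMod p)) → ZMod k × ZMod p}
    (hham : IsHamCycle (metaGraph k p r) c)
    (hsym : IsSymmHamCycle (metaGraph k p r) c k') : k' ≤ k := by
  haveI : Fact p.Prime := ⟨hpp⟩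
  obtain ⟨hbij, hadj⟩ := hham
  obtain ⟨hdvd, α, hαA, hshift⟩ := hsym
  have hN : Fintype.card (ZMod k × ZMod p) = k * p := card_V k p
  have hk0 : 0 < k := by omega
  have hp0 : 0 < p := hpp.pos
  have hN0 : Fintype.card (ZMod k × ZMod p) ≠ 0 := by rw [hN]; positivity
  by_contra hlt
  push_neg at hlt
  have hk'0 : k' ≠ 0 := by
    intro h
    rw [h] at hdvd
    exact hN0 (Nat.eq_zero_of_zero_dvd hdvd)
  have hpk' : p ∣ k' := by
    by_contra hnd
    have hcop : k'.Coprime p := ((Nat.Prime.coprime_iff_not_dvd hpp).2 hnd).symm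
    have : k' ∣ k := hcop.dvd_of_dvd_mul_right (by rw [← hN]; exact hdvd)
    have := Nat.le_of_dvd hk0 this
    omega
  obtain ⟨e, he⟩ := hdvd  -- N = k' * e
  obtain ⟨d, hd⟩ := hpk'  -- k' = p * d
  have hk'pos : 0 < k' := Nat.pos_of_ne_zero hk'0
  have hNk' : Fintype.card (ZMod k × ZMod p) / k' = e := by rw [he]; exact Nat.mul_div_cancel_left e hk'pos
  have hde : d * e = k := by
    have h1 : k * p = p * (d * e) := by rw [← hN, he, hd]; ring
    have h2 : p * k = p * (d * e) := by rw [← h1]; ring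
    exact (Nat.eq_of_mul_eq_mul_left hp0 h2).symm
  set β : Equiv.Perm (ZMod k × ZMod p) := α ^ d with hβdef
  have key : ∀ i, β (c i) = c (i + ((k : ℕ) : ZMod (Fintype.card (ZMod k × ZMod p)))) := by
    intro i
    have := shift_pow (α := α) (d := Fintype.card (ZMod k × ZMod p) / k') hshift d i
    rw [hβdef, this, hNk', hde]
  have hβA : β ∈ autSubgroup (metaGraph k p r) := pow_mem hαA d
  have hβp1 : β ^ p = 1 := by
    refine Equiv.ext fun v => ?_
    obtain ⟨i, rfl⟩ := hbij.2 v
    have := shift_pow (α := β) (d := k) key p i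
    rw [this]
    have hzero : ((p * k : ℕ) : ZMod (Fintype.card (ZMod k × ZMod p))) = 0 := by
      rw [show p * k = Fintype.card (ZMod k × ZMod p) by rw [hN]; ring]
      exact ZMod.natCast_self _
    rw [hzero, add_zero]
    rfl
  have hβ1 : β ≠ 1 := by
    intro h
    have h0 := key 0
    rw [h, Equiv.Perm.coe_one, id_eq, zero_add] at h0
    have := hbij.1 h0
    have hkz : ((k : ℕ) : ZMod (Fintype.card (ZMod k × ZMod p))) = 0 := this.symm
    have hdk : Fintype.card (ZMod k × ZMod p) ∣ k := (ZMod.natCast_eq_zero_iff k _).1 hkz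
    have := Nat.le_of_dvd hk0 hdk
    rw [hN] at this
    have hp2 := hpp.two_le
    nlinarith
  obtain ⟨g, n, hgA, hn0, hconj⟩ := conj_to_rho hk hpp hmod hord hβA hβp1 hβ1
  -- the second coordinate of `g⁻¹ ∘ c` is constant along the cycle
  have horb : ∀ i : ZMod (Fintype.card (ZMod k × ZMod p)), (g⁻¹ (c (i + 1))).2 = (g⁻¹ (c i)).2 := by
    intro i
    have hadj1 := hadj i
    have hgi : g⁻¹ ∈ autSubgroup (metaGraph k p r) := inv_mem hgA
    have hadj2 : (metaGraph k p r).Adj (g⁻¹ (c i)) (g⁻¹ (c (i + 1))) :=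
      (mem_autSubgroup_iff.1 hgi (c i) (c (i + 1))).2 hadj1
    rcases adj_fst_or_snd hadj2 with hfst | hsnd
    · exfalso
      set w : ZMod k × ZMod p := g⁻¹ (c i) with hw
      set w' : ZMod k × ZMod p := g⁻¹ (c (i + 1)) with hw'
      set m : ℕ := ((w'.2 - w.2) * ((n : ZMod p))⁻¹).val with hm
      have hβm : β ^ m = g * (rho k p) ^ (n * m) * g⁻¹ := by
        rw [hconj, conj_pow, ← pow_mul]
      have hval : ((n * m : ℕ) : ZMod p) = w'.2 - w.2 := by
        push_cast
        rw [hm, ZMod.natCast_rightInverse]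
        rw [← mul_assoc, mul_comm ((n : ZMod p)) (w'.2 - w.2), mul_assoc,
          mul_inv_cancel₀ hn0, mul_one]
      have happ : (β ^ m) (c i) = c (i + 1) := by
        rw [hβm, Equiv.Perm.mul_apply, Equiv.Perm.mul_apply, ← hw, rho_pow_apply, hval, hfst]
        have : (w'.1, w.2 + (w'.2 - w.2)) = w' := by
          rw [Prod.ext_iff]
          constructor
          · rfl
          · simp
        rw [this, hw']
        exact Equiv.apply_symm_apply g _
      have happ2 : (β ^ m) (c i) = c (i + ((m * k : ℕ) : ZMod (Fintype.card (ZMod k × ZMod p)))) :=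
        shift_pow (α := β) (d := k) key m i
      have hinj := hbij.1 (happ.symm.trans happ2)
      have h1 : (1 : ZMod (Fintype.card (ZMod k × ZMod p))) = ((m * k : ℕ) : ZMod (Fintype.card (ZMod k × ZMod p))) := by
        have := congrArg (fun z => z - i) hinj
        simpa using this
      have h2 := congrArg (ZMod.castHom (show k ∣ Fintype.card (ZMod k × ZMod p) by rw [hN]; exact dvd_mul_right k p) (ZMod k)) h1
      rw [map_one, map_natCast] at h2
      have h3 : ((m * k : ℕ) : ZMod k) = 0 := by
        exact (ZMod.natCast_eq_zero_iff _ _).2 ⟨m, by ring⟩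
      rw [h3] at h2
      exact one_ne_zero_zmodk hk h2
    · exact hsnd.symm
  have hconst : ∀ T : ℕ, (g⁻¹ (c ((T : ℕ) : ZMod (Fintype.card (ZMod k × ZMod p))))).2 = (g⁻¹ (c 0)).2 := by
    intro T
    induction T with
    | zero => rw [Nat.cast_zero]
    | succ T ih =>
        have : ((T + 1 : ℕ) : ZMod (Fintype.card (ZMod k × ZMod p))) = ((T : ℕ) : ZMod (Fintype.card (ZMod k × ZMod p))) + 1 := by push_cast; ring
        rw [this, horb]
        exact ih
  have hall : ∀ i : ZMod (Fintype.card (ZMod k × ZMod p)), (g⁻¹ (c i)).2 = (g⁻¹ (c 0)).2 := by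
    intro i
    have := hconst i.val
    rwa [ZMod.natCast_rightInverse i] at this
  obtain ⟨i1, hi1⟩ := hbij.2 (g ((0 : ZMod k), (g⁻¹ (c 0)).2 + 1))
  have hcontr := hall i1
  rw [hi1, ← Equiv.Perm.mul_apply, inv_mul_cancel, Equiv.Perm.one_apply] at hcontr
  simp only at hcontr
  have : (1 : ZMod p) = 0 := by
    have := congrArg (fun z => z - (g⁻¹ (c 0)).2) hcontr
    simpa using this
  exact one_ne_zero_zmodk hpp.two_le this

end Upper

/-! ### The lower bound: an explicit k-symmetric Hamilton cycle -/

section Lower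

variable {k p : ℕ} {r : (ZMod p)ˣ}

/-- The Hamilton cycle of `X(k,p;r)`, as a function of a natural number step index. -/
def Fc (k p : ℕ) (r : (ZMod p)ˣ) (T : ℕ) : ZMod k × ZMod p :=
  if T % p ≤ (((r : ZMod p) - 1)⁻¹ : ZMod p).val then
    (-(T / p : ℕ), ((r⁻¹ ^ (T / p) : (ZMod p)ˣ) : ZMod p) * ((T % p : ℕ) : ZMod p))
  else
    (-(T / p : ℕ) - 1, ((r⁻¹ ^ (T / p + 1) : (ZMod p)ˣ) : ZMod p) * ((T % p : ℕ) : ZMod p))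

/-- The twisted shift automorphism `(i,x) ↦ (i-1, r⁻¹ x)`. -/
def tshift (k p : ℕ) (r : (ZMod p)ˣ) : Equiv.Perm (ZMod k × ZMod p) where
  toFun := fun v => (v.1 - 1, ((r⁻¹ : (ZMod p)ˣ) : ZMod p) * v.2)
  invFun := fun v => (v.1 + 1, (r : ZMod p) * v.2)
  left_inv := by
    rintro ⟨i, x⟩
    simp only [Prod.mk.injEq]
    constructor
    · ring
    · rw [← mul_assoc, ← Units.val_mul, mul_inv_cancel, Units.val_one, one_mul]
  right_inv := by
    rintro ⟨i, x⟩
    simp only [Prod.mk.injEq]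
    constructor
    · ring
    · rw [← mul_assoc, ← Units.val_mul, inv_mul_cancel, Units.val_one, one_mul]

lemma tshift_apply (v : ZMod k × ZMod p) :
    tshift k p r v = (v.1 - 1, ((r⁻¹ : (ZMod p)ˣ) : ZMod p) * v.2) := rfl

section WithHyps

variable [NeZero k] [NeZero p] (hk : 2 ≤ k) (hpp : p.Prime) (hmod : p ≡ 1 [MOD k])
  (hord : orderOf r = k)

include hord in
lemma runit_congr {a b : ℕ} (h : (a : ZMod k) = (b : ZMod k)) :
    (r : (ZMod p)ˣ) ^ a = r ^ b := by
  rw [pow_eq_pow_iff_modEq, hord]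
  exact (ZMod.natCast_eq_natCast_iff a b k).1 h

include hord in
lemma uunit_congr {a b : ℕ} (h : (a : ZMod k) = (b : ZMod k)) :
    (r⁻¹ : (ZMod p)ˣ) ^ a = r⁻¹ ^ b := by
  rw [pow_eq_pow_iff_modEq, orderOf_inv, hord]
  exact (ZMod.natCast_eq_natCast_iff a b k).1 h

include hord in
lemma hkey (q : ℕ) : (r : (ZMod p)ˣ) ^ ((-(q : ZMod k)).val) = r⁻¹ ^ q := by
  have h1 : (r : (ZMod p)ˣ) ^ ((-(q : ZMod k)).val) * r ^ q = 1 := by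
    rw [← pow_add]
    have h2 : (((-(q : ZMod k)).val + q : ℕ) : ZMod k) = ((0 : ℕ) : ZMod k) := by
      push_cast
      rw [ZMod.natCast_rightInverse]
      ring
    rw [runit_congr hord h2, pow_zero]
  rw [inv_pow]
  exact eq_inv_of_mul_eq_one_left h1

include hord in
lemma rsub_ne (hk : 2 ≤ k) : (r : ZMod p) - 1 ≠ 0 := by
  intro h
  have hr1 : (r : ZMod p) = 1 := by linear_combination h
  have : r = 1 := Units.ext (by simpa using hr1)
  rw [this, orderOf_one] at hord
  omega

include hk hpp hord in
lemma j0_mul : ((r : ZMod p) - 1) * ((r : ZMod p) - 1)⁻¹ = 1 := by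
  haveI : Fact p.Prime := ⟨hpp⟩
  exact mul_inv_cancel₀ (rsub_ne hord hk)

include hpp in
lemma cast_p_sub_one : ((p - 1 : ℕ) : ZMod p) = -1 := by
  have h0 : ((p : ℕ) : ZMod p) = 0 := ZMod.natCast_self p
  rw [Nat.cast_sub hpp.one_le, h0]
  push_cast
  ring

include hk hpp hord in
lemma j0_val_lt : (((r : ZMod p) - 1)⁻¹ : ZMod p).val < p - 1 := by
  haveI : Fact p.Prime := ⟨hpp⟩
  have hlt : (((r : ZMod p) - 1)⁻¹ : ZMod p).val < p := ZMod.val_lt _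
  have hne : (((r : ZMod p) - 1)⁻¹ : ZMod p).val ≠ p - 1 := by
    intro h
    have hj : (((r : ZMod p) - 1)⁻¹ : ZMod p) = -1 := by
      have hcast := ZMod.natCast_rightInverse (n := p) (((r : ZMod p) - 1)⁻¹)
      rw [← hcast, h, cast_p_sub_one hpp]
    have hmul := j0_mul hk hpp hord
    rw [hj] at hmul
    have hr0 : (r : ZMod p) = 0 := by linear_combination -hmul
    exact r.ne_zero hr0
  omega

include hk hpp hmod hord in
lemma F_adj (T : ℕ) : (metaGraph k p r).Adj (Fc k p r T) (Fc k p r (T + 1)) := by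
  haveI : Fact p.Prime := ⟨hpp⟩
  have hj0lt := j0_val_lt hk hpp hord
  set j0v : ℕ := (((r : ZMod p) - 1)⁻¹ : ZMod p).val with hj0v
  set q : ℕ := T / p with hq
  set s : ℕ := T % p with hs
  have hsp : s < p := Nat.mod_lt _ hpp.pos
  have hT : p * q + s = T := Nat.div_add_mod T p
  have hlayer : ∀ m : ℕ, (r : ZMod p) ^ ((-(m : ZMod k)).val)
      = ((r⁻¹ ^ m : (ZMod p)ˣ) : ZMod p) := by
    intro m
    rw [← Units.val_pow_eq_pow_val, hkey hord m]
  have hi1 : (-(q : ZMod k) - 1) = -(((q + 1 : ℕ)) : ZMod k) := by push_cast; ring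
  rcases Nat.lt_or_ge (s + 1) p with hlt | hge
  · have harr : p * q + s + 1 = p * q + (s + 1) := by ring
    have hmod1 : (T + 1) % p = s + 1 := by
      rw [← hT, harr, Nat.mul_add_mod, Nat.mod_eq_of_lt hlt]
    have hdiv1 : (T + 1) / p = q := by
      rw [← hT, harr, Nat.mul_add_div hpp.pos, Nat.div_eq_of_lt hlt, add_zero]
    by_cases h1 : s + 1 ≤ j0v
    · -- case (a): both in branch 1
      have h2 : s ≤ j0v := by omega
      rw [Fc, Fc, ← hs, ← hq, hmod1, hdiv1, if_pos h2, if_pos h1]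
      have hcast : ((s + 1 : ℕ) : ZMod p) = ((s : ℕ) : ZMod p) + 1 := by push_cast; ring
      rw [hcast, mul_add, mul_one]
      have := adj_horiz (k := k) (r := r) hpp (-(q : ZMod k))
        (((r⁻¹ ^ q : (ZMod p)ˣ) : ZMod p) * ((s : ℕ) : ZMod p))
      rwa [hlayer q] at this
    · by_cases h2 : s ≤ j0v
      · -- case (b): vertical step, s = j0v
        have hsj : s = j0v := by omega
        rw [Fc, Fc, ← hs, ← hq, hmod1, hdiv1, if_pos h2, if_neg h1]
        have hjcast : ((s : ℕ) : ZMod p) = ((r : ZMod p) - 1)⁻¹ := by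
          rw [hsj, hj0v]
          exact ZMod.natCast_rightInverse _
        have hrs : (r : ZMod p) * ((s : ℕ) : ZMod p) = ((s : ℕ) : ZMod p) + 1 := by
          rw [hjcast]
          linear_combination j0_mul hk hpp hord
        have hxeq : ((r⁻¹ ^ (q + 1) : (ZMod p)ˣ) : ZMod p) * ((s + 1 : ℕ) : ZMod p)
            = ((r⁻¹ ^ q : (ZMod p)ˣ) : ZMod p) * ((s : ℕ) : ZMod p) := by
          have hpow : (r⁻¹ ^ (q + 1) : (ZMod p)ˣ) = r⁻¹ ^ q * r⁻¹ := by rw [pow_succ]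
          have hui : ((r⁻¹ : (ZMod p)ˣ) : ZMod p) * (r : ZMod p) = 1 := by
            rw [← Units.val_mul, inv_mul_cancel, Units.val_one]
          have hcast : ((s + 1 : ℕ) : ZMod p) = ((s : ℕ) : ZMod p) + 1 := by push_cast; ring
          rw [hpow, Units.val_mul, hcast, ← hrs]
          calc ((r⁻¹ ^ q : (ZMod p)ˣ) : ZMod p) * ((r⁻¹ : (ZMod p)ˣ) : ZMod p)
              * ((r : ZMod p) * ((s : ℕ) : ZMod p))
              = ((r⁻¹ ^ q : (ZMod p)ˣ) : ZMod p) *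
                ((((r⁻¹ : (ZMod p)ˣ) : ZMod p) * (r : ZMod p)) * ((s : ℕ) : ZMod p)) := by ring
            _ = _ := by rw [hui, one_mul]
        rw [hxeq]
        have hv := adj_vert (p := p) (r := r) hk (-(q : ZMod k) - 1)
          (((r⁻¹ ^ q : (ZMod p)ˣ) : ZMod p) * ((s : ℕ) : ZMod p))
        rw [sub_add_cancel] at hv
        exact hv.symm
      · -- case (c): both in branch 2
        have h3 : ¬ (s + 1 ≤ j0v) := by omega
        rw [Fc, Fc, ← hs, ← hq, hmod1, hdiv1, if_neg h2, if_neg h3]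
        have hcast : ((s + 1 : ℕ) : ZMod p) = ((s : ℕ) : ZMod p) + 1 := by push_cast; ring
        rw [hcast, mul_add, mul_one]
        have := adj_horiz (k := k) (r := r) hpp (-(q : ZMod k) - 1)
          (((r⁻¹ ^ (q + 1) : (ZMod p)ˣ) : ZMod p) * ((s : ℕ) : ZMod p))
        rwa [hi1, hlayer (q + 1), ← hi1] at this
  · -- wrap-around within a segment: s = p - 1
    have hs1 : s + 1 = p := by omega
    have hT1 : T + 1 = p * (q + 1) := by rw [← hT]; ring_nf; omega
    have hmod1 : (T + 1) % p = 0 := by rw [hT1]; exact Nat.mul_mod_right p (q + 1)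
    have hdiv1 : (T + 1) / p = q + 1 := by
      rw [hT1]
      exact Nat.mul_div_cancel_left (q + 1) hpp.pos
    have hsj : ¬ (s ≤ j0v) := by omega
    rw [Fc, Fc, ← hs, ← hq, hmod1, hdiv1, if_neg hsj, if_pos (Nat.zero_le _)]
    have hsm : ((s : ℕ) : ZMod p) = -1 := by
      have : s = p - 1 := by omega
      rw [this, cast_p_sub_one hpp]
    have hzero : ((r⁻¹ ^ (q + 1) : (ZMod p)ˣ) : ZMod p) * ((s : ℕ) : ZMod p)
        + ((r⁻¹ ^ (q + 1) : (ZMod p)ˣ) : ZMod p)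
        = ((r⁻¹ ^ (q + 1) : (ZMod p)ˣ) : ZMod p) * ((0 : ℕ) : ZMod p) := by
      rw [hsm]
      push_cast
      ring
    have := adj_horiz (k := k) (r := r) hpp (-(q : ZMod k) - 1)
      (((r⁻¹ ^ (q + 1) : (ZMod p)ˣ) : ZMod p) * ((s : ℕ) : ZMod p))
    rw [hi1, hlayer (q + 1)] at this
    rw [← hi1] at this
    have hfin : (-(((q + 1 : ℕ)) : ZMod k), ((r⁻¹ ^ (q + 1) : (ZMod p)ˣ) : ZMod p)
        * ((0 : ℕ) : ZMod p)) = (-(q : ZMod k) - 1, ((r⁻¹ ^ (q + 1) : (ZMod p)ˣ) : ZMod p)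
        * ((s : ℕ) : ZMod p) + ((r⁻¹ ^ (q + 1) : (ZMod p)ˣ) : ZMod p)) := by
      rw [Prod.ext_iff]
      exact ⟨by rw [hi1], by rw [hzero]⟩
    rw [hfin]
    exact this

include hord in
lemma uu_cancel {a b : ℕ} (h : ((a + b : ℕ) : ZMod k) = 0) :
    (r⁻¹ ^ a : (ZMod p)ˣ) * r⁻¹ ^ b = 1 := by
  rw [← pow_add]
  have h2 := uunit_congr (p := p) hord (a := a + b) (b := 0) (by simpa using h)
  simpa using h2

include hord in
lemma pow_val_sub_one (a : ZMod k) :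
    (r : (ZMod p)ˣ) ^ ((a - 1).val) = r ^ a.val * r⁻¹ := by
  have h : (r : (ZMod p)ˣ) ^ ((a - 1).val) * r = r ^ a.val := by
    rw [← pow_succ]
    apply runit_congr hord
    push_cast
    rw [ZMod.natCast_rightInverse (a - 1), ZMod.natCast_rightInverse a]
    ring
  rw [← h, mul_assoc, mul_inv_cancel, mul_one]

include hk hpp hord in
lemma tshift_mem : tshift k p r ∈ autSubgroup (metaGraph k p r) := by
  haveI : Fact p.Prime := ⟨hpp⟩
  have hui : ((r⁻¹ : (ZMod p)ˣ) : ZMod p) * (r : ZMod p) = 1 := by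
    rw [← Units.val_mul, inv_mul_cancel, Units.val_one]
  have hpow : ∀ a : ZMod k, ((r : ZMod p)) ^ ((a - 1).val)
      = ((r⁻¹ : (ZMod p)ˣ) : ZMod p) * ((r : ZMod p)) ^ a.val := by
    intro a
    have := pow_val_sub_one (p := p) hord a
    have h2 := congrArg (Units.val) this
    rw [Units.val_pow_eq_pow_val, Units.val_mul, Units.val_pow_eq_pow_val] at h2
    rw [h2]
    ring
  have hinj : ∀ b d : ZMod p, ((r⁻¹ : (ZMod p)ˣ) : ZMod p) * b
      = ((r⁻¹ : (ZMod p)ˣ) : ZMod p) * d ↔ b = d := by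
    intro b d
    constructor
    · intro h
      have := congrArg (fun z => (r : ZMod p) * z) h
      rw [← mul_assoc, ← mul_assoc, mul_comm ((r : ZMod p)), hui, one_mul, one_mul] at this
      exact this
    · intro h; rw [h]
  rw [mem_autSubgroup_iff]
  rintro ⟨a, b⟩ ⟨c, d⟩
  rw [meta_adj_iff, meta_adj_iff]
  simp only [tshift, Equiv.coe_fn_mk, ne_eq, Prod.mk.injEq]
  constructor
  · rintro ⟨hne, hrel⟩
    refine ⟨fun h => hne ⟨by rw [h.1], by rw [h.2]⟩, ?_⟩
    rcases hrel with ⟨h1, h2⟩ | ⟨h1, h2⟩ | ⟨h1, h2⟩ | ⟨h1, h2⟩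
    · refine Or.inl ⟨by linear_combination h1, ?_⟩
      refine (hinj d (b + (r : ZMod p) ^ a.val)).1 ?_
      rw [h2, hpow a]
      ring
    · exact Or.inr (Or.inl ⟨(hinj b d).1 h1, by linear_combination h2⟩)
    · refine Or.inr (Or.inr (Or.inl ⟨by linear_combination h1, ?_⟩))
      refine (hinj b (d + (r : ZMod p) ^ c.val)).1 ?_
      rw [h2, hpow c]
      ring
    · exact Or.inr (Or.inr (Or.inr ⟨(hinj d b).1 h1, by linear_combination h2⟩))
  · rintro ⟨hne, hrel⟩
    refine ⟨?_, ?_⟩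
    · rintro ⟨e1, e2⟩
      exact hne ⟨by linear_combination e1, (hinj b d).1 e2⟩
    · rcases hrel with ⟨h1, h2⟩ | ⟨h1, h2⟩ | ⟨h1, h2⟩ | ⟨h1, h2⟩
      · refine Or.inl ⟨by rw [h1], ?_⟩
        rw [h2, hpow a]
        ring
      · exact Or.inr (Or.inl ⟨by rw [h1], by rw [h2]; ring⟩)
      · refine Or.inr (Or.inr (Or.inl ⟨by rw [h1], ?_⟩))
        rw [h2, hpow c]
        ring
      · exact Or.inr (Or.inr (Or.inr ⟨by rw [h1], by rw [h2]; ring⟩))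

include hpp hord in
lemma tshift_shift (T : ℕ) : tshift k p r (Fc k p r T) = Fc k p r (T + p) := by
  haveI : Fact p.Prime := ⟨hpp⟩
  have hmod1 : (T + p) % p = T % p := Nat.add_mod_right T p
  have hdiv1 : (T + p) / p = T / p + 1 := Nat.add_div_right T hpp.pos
  have hupow : ∀ m : ℕ, ((r⁻¹ ^ (m + 1) : (ZMod p)ˣ) : ZMod p)
      = ((r⁻¹ : (ZMod p)ˣ) : ZMod p) * ((r⁻¹ ^ m : (ZMod p)ˣ) : ZMod p) := by
    intro m
    rw [pow_succ, Units.val_mul]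
    ring
  rw [Fc, Fc, hmod1, hdiv1]
  by_cases hbr : T % p ≤ (((r : ZMod p) - 1)⁻¹ : ZMod p).val
  · rw [if_pos hbr, if_pos hbr, tshift_apply]
    simp only [Prod.mk.injEq]
    constructor
    · push_cast
      ring
    · rw [hupow (T / p)]
      ring
  · rw [if_neg hbr, if_neg hbr, tshift_apply]
    simp only [Prod.mk.injEq]
    constructor
    · push_cast
      ring
    · rw [hupow (T / p + 1)]
      ring

include hk hpp hord in
lemma Fc_mod (T : ℕ) : Fc k p r (T % (k * p)) = Fc k p r T := by
  have hpd : p ∣ k * p := dvd_mul_left p k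
  have hmm : (T % (k * p)) % p = T % p := Nat.mod_mod_of_dvd T hpd
  obtain ⟨m, hm⟩ : ∃ m, T / p = (T % (k * p)) / p + k * m := by
    refine ⟨T / (k * p), ?_⟩
    conv_lhs => rw [← Nat.mod_add_div T (k * p)]
    rw [show k * p * (T / (k * p)) = p * (k * (T / (k * p))) by ring]
    rw [Nat.add_mul_div_left _ _ hpp.pos]
  have hq : ((T / p : ℕ) : ZMod k) = (((T % (k * p)) / p : ℕ) : ZMod k) := by
    rw [hm]
    push_cast
    rw [ZMod.natCast_self]
    ring
  have hq1 : ((T / p + 1 : ℕ) : ZMod k) = (((T % (k * p)) / p + 1 : ℕ) : ZMod k) := by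
    push_cast
    push_cast at hq
    rw [hq]
  rw [Fc, Fc, hmm]
  by_cases hbr : T % p ≤ (((r : ZMod p) - 1)⁻¹ : ZMod p).val
  · rw [if_pos hbr, if_pos hbr]
    simp only [Prod.mk.injEq]
    constructor
    · rw [hq]
    · rw [uunit_congr (p := p) hord hq.symm]
  · rw [if_neg hbr, if_neg hbr]
    simp only [Prod.mk.injEq]
    constructor
    · rw [hq]
    · rw [uunit_congr (p := p) hord hq1.symm]

include hk hpp hmod hord in
lemma F_surj (v : ZMod k × ZMod p) : ∃ T : ℕ, Fc k p r T = v := by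
  haveI : Fact p.Prime := ⟨hpp⟩
  obtain ⟨i, x⟩ := v
  set s : ZMod p := ((r⁻¹ ^ i.val : (ZMod p)ˣ) : ZMod p) * x with hsdef
  have hscast : ((s.val : ℕ) : ZMod p) = s := ZMod.natCast_rightInverse s
  have hx : ∀ a : ℕ, (((a : ZMod k)) = -i) →
      ((r⁻¹ ^ a : (ZMod p)ˣ) : ZMod p) * ((s.val : ℕ) : ZMod p) = x := by
    intro a ha
    rw [hscast, hsdef, ← mul_assoc, ← Units.val_mul,
      uu_cancel (p := p) hord (by push_cast; rw [ha, ZMod.natCast_rightInverse i]; ring),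
      Units.val_one, one_mul]
  by_cases hbr : s.val ≤ (((r : ZMod p) - 1)⁻¹ : ZMod p).val
  · refine ⟨(-i).val * p + s.val, ?_⟩
    have hmod : ((-i).val * p + s.val) % p = s.val := by
      rw [Nat.add_comm, Nat.add_mul_mod_self_right, Nat.mod_eq_of_lt (ZMod.val_lt s)]
    have hdiv : ((-i).val * p + s.val) / p = (-i).val := by
      rw [Nat.add_comm, Nat.add_mul_div_right _ _ hpp.pos,
        Nat.div_eq_of_lt (ZMod.val_lt s), zero_add]
    rw [Fc, hmod, hdiv, if_pos hbr]
    simp only [Prod.mk.injEq]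
    constructor
    · rw [ZMod.natCast_rightInverse (-i)]
      ring
    · exact hx (-i).val (ZMod.natCast_rightInverse (-i))
  · refine ⟨(-i - 1).val * p + s.val, ?_⟩
    have hmod : ((-i - 1).val * p + s.val) % p = s.val := by
      rw [Nat.add_comm, Nat.add_mul_mod_self_right, Nat.mod_eq_of_lt (ZMod.val_lt s)]
    have hdiv : ((-i - 1).val * p + s.val) / p = (-i - 1).val := by
      rw [Nat.add_comm, Nat.add_mul_div_right _ _ hpp.pos,
        Nat.div_eq_of_lt (ZMod.val_lt s), zero_add]
    rw [Fc, hmod, hdiv, if_neg hbr]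
    simp only [Prod.mk.injEq]
    constructor
    · rw [ZMod.natCast_rightInverse (-i - 1)]
      ring
    · refine hx ((-i - 1).val + 1) ?_
      push_cast
      rw [ZMod.natCast_rightInverse (-i - 1)]
      ring

include hk hpp hmod hord in
lemma lower_bound : ∃ c, IsHamCycle (metaGraph k p r) c ∧
    IsSymmHamCycle (metaGraph k p r) c k := by
  haveI : Fact p.Prime := ⟨hpp⟩
  have hN : Fintype.card (ZMod k × ZMod p) = k * p := card_V k p
  haveI : NeZero (Fintype.card (ZMod k × ZMod p)) :=
    ⟨by rw [hN]; exact Nat.mul_ne_zero (by omega) hpp.ne_zero⟩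
  refine ⟨fun t => Fc k p r t.val, ⟨?_, ?_⟩, ?_, tshift k p r, tshift_mem hk hpp hord, ?_⟩
  · -- bijective
    rw [Fintype.bijective_iff_surjective_and_card]
    constructor
    · intro v
      obtain ⟨T, hT⟩ := F_surj hk hpp hmod hord v
      refine ⟨((T : ℕ) : ZMod (Fintype.card (ZMod k × ZMod p))), ?_⟩
      show Fc k p r (((T : ℕ) : ZMod (Fintype.card (ZMod k × ZMod p)))).val = v
      rw [ZMod.val_natCast]
      have hFm := Fc_mod (r := r) hk hpp hord T
      rw [← hN] at hFm
      rw [hFm, hT]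
    · rw [ZMod.card]
  · -- adjacency
    intro i
    have h1 : i = ((i.val : ℕ) : ZMod (Fintype.card (ZMod k × ZMod p))) :=
      (ZMod.natCast_rightInverse i).symm
    have h2 : (i + 1).val = (i.val + 1) % (Fintype.card (ZMod k × ZMod p)) := by
      conv_lhs => rw [h1]
      rw [show ((i.val : ℕ) : ZMod (Fintype.card (ZMod k × ZMod p))) + 1
        = ((i.val + 1 : ℕ) : ZMod (Fintype.card (ZMod k × ZMod p))) by push_cast; ring]
      rw [ZMod.val_natCast]
    show (metaGraph k p r).Adj (Fc k p r i.val) (Fc k p r (i + 1).val)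
    rw [h2]
    have hFm := Fc_mod (r := r) hk hpp hord (i.val + 1)
    rw [← hN] at hFm
    rw [hFm]
    exact F_adj hk hpp hmod hord i.val
  · rw [hN]
    exact Dvd.intro p rfl
  · -- the symmetry shift
    intro i
    have hNk : Fintype.card (ZMod k × ZMod p) / k = p := by
      rw [hN]
      exact Nat.mul_div_cancel_left p (by omega)
    rw [hNk]
    show tshift k p r (Fc k p r i.val) = Fc k p r (i + (p : ℕ)).val
    rw [tshift_shift hpp hord]
    have h2 : (i + (p : ℕ)).val = (i.val + p) % (Fintype.card (ZMod k × ZMod p)) := by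
      conv_lhs => rw [show i + ((p : ℕ) : ZMod (Fintype.card (ZMod k × ZMod p)))
        = ((i.val + p : ℕ) : ZMod (Fintype.card (ZMod k × ZMod p))) by
          push_cast
          rw [ZMod.natCast_rightInverse i]]
      rw [ZMod.val_natCast]
    rw [h2]
    have hFm := Fc_mod (r := r) hk hpp hord (i.val + p)
    rw [← hN] at hFm
    exact hFm.symm

end WithHyps

end Lower

end Stmt3Aux

/-- For an integer `k ≥ 2` and a prime `p ≡ 1 (mod k)`, if `r` is a
unit of `ℤ/p` of multiplicative order `k`, then `κ(X(k,p;r)) = k`. -/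
theorem stmt3 (k p : ℕ) (hk : 2 ≤ k) (hp : p.Prime) (hmod : p ≡ 1 [MOD k])
    (r : (ZMod p)ˣ) (hord : orderOf r = k) :
    haveI : NeZero k := ⟨by omega⟩
    haveI : NeZero p := ⟨hp.ne_zero⟩
    hamiltonCompression (metaGraph k p r) = k := by
  haveI : NeZero k := ⟨by omega⟩
  haveI : NeZero p := ⟨hp.ne_zero⟩
  show hamiltonCompression (metaGraph k p r) = k
  have hmem : k ∈ {k' | ∃ c, IsHamCycle (metaGraph k p r) c ∧
      IsSymmHamCycle (metaGraph k p r) c k'} := Stmt3Aux.lower_bound hk hp hmod hord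
  have hub : k ∈ upperBounds {k' | ∃ c, IsHamCycle (metaGraph k p r) c ∧
      IsSymmHamCycle (metaGraph k p r) c k'} := by
    rintro k' ⟨c, hham, hsym⟩
    exact Stmt3Aux.upper_bound hk hp hmod hord hham hsym
  rw [hamiltonCompression]
  exact le_antisymm (csSup_le ⟨k, hmem⟩ hub) (le_csSup ⟨k, hub⟩ hmem)
end

section
/- Let k ≥ 2 be an integer and p a prime with p ≡ 1 (mod k), and let r be a unit of ℤ/pℤ of multiplicative order k. Then the permutation ρ of ℤ/kℤ × ℤ/pℤ given by ρ(i,j) = (i, j+1) is an automorphism of X(k,p;r), the cyclic group ⟨ρ⟩ of order p is a Sylow p-subgroup of the automorphism group of X(k,p;r), and in particular p² does not divide the order of the automorphism group of X(k,p;r). -/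
open SimpleGraph

/-- The rotation `ρ : (i,j) ↦ (i, j+1)` of `ℤ/m × ℤ/n`. -/
def rhoPerm (m n : ℕ) : Equiv.Perm (ZMod m × ZMod n) :=
  (Equiv.refl (ZMod m)).prodCongr (Equiv.addRight (1 : ZMod n))

/-- The twisted rotation `σ : (i,j) ↦ (i+1, r·j)` of `ℤ/m × ℤ/n`. -/
def sigmaPerm (m n : ℕ) (r : (ZMod n)ˣ) : Equiv.Perm (ZMod m × ZMod n) :=
  (Equiv.addRight (1 : ZMod m)).prodCongr (Units.mulLeft r)

lemma rho_apply (m n : ℕ) (v : ZMod m × ZMod n) : rhoPerm m n v = (v.1, v.2 + 1) := rfl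

lemma rho_pow_apply (m n : ℕ) (t : ℕ) (v : ZMod m × ZMod n) :
    ((rhoPerm m n) ^ t) v = (v.1, v.2 + t) := by
  induction t with
  | zero => simp
  | succ t ih =>
    rw [pow_succ', Equiv.Perm.mul_apply, rho_apply, ih]
    push_cast
    simp [add_assoc, add_comm]

lemma rho_zpow_apply (m n : ℕ) (t : ℤ) (v : ZMod m × ZMod n) :
    ((rhoPerm m n) ^ t) v = (v.1, v.2 + t) := by
  induction t using Int.induction_on generalizing v with
  | zero => simp
  | succ i ih =>
    rw [show ((i:ℤ)+1) = ((i+1:ℕ):ℤ) by push_cast; ring, zpow_natCast, rho_pow_apply]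
    push_cast; ring_nf
  | pred i ih =>
    have : ((rhoPerm m n) ^ (-(i:ℤ) - 1)) v = ((rhoPerm m n) ^ (-(i:ℤ))) ((rhoPerm m n)⁻¹ v) := by
      rw [sub_eq_add_neg, zpow_add, zpow_neg_one, Equiv.Perm.mul_apply]
    rw [this, ih]
    have hinv : (rhoPerm m n)⁻¹ = (Equiv.refl (ZMod m)).prodCongr (Equiv.addRight (-1 : ZMod n)) := by
      ext v <;> simp [rhoPerm] <;> rfl
    rw [hinv]
    simp only [Equiv.prodCongr_apply, Equiv.coe_refl, Prod.map, id, Equiv.coe_addRight]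
    push_cast; ring_nf

lemma meta_adj (m n : ℕ) (r : (ZMod n)ˣ) (u v : ZMod m × ZMod n) :
    (metaGraph m n r).Adj u v ↔ u ≠ v ∧
      ((u.1 = v.1 ∧ (v.2 = u.2 + (r:ZMod n) ^ u.1.val ∨ u.2 = v.2 + (r:ZMod n) ^ v.1.val)) ∨
       (u.2 = v.2 ∧ (v.1 = u.1 + 1 ∨ u.1 = v.1 + 1))) := by
  simp only [metaGraph, fromRel_adj]
  constructor
  · rintro ⟨h, h2 | h2⟩ <;> exact ⟨h, by tauto⟩
  · rintro ⟨h, h2⟩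
    refine ⟨h, ?_⟩
    rcases h2 with ⟨h1, h2 | h2⟩ | ⟨h1, h2 | h2⟩
    · exact Or.inl (Or.inl ⟨h1, h2⟩)
    · exact Or.inr (Or.inl ⟨h1.symm, h2⟩)
    · exact Or.inl (Or.inr ⟨h1, h2⟩)
    · exact Or.inr (Or.inr ⟨h1.symm, h2⟩)

lemma mem_aut_iff {V : Type*} (X : SimpleGraph V) (π : Equiv.Perm V) :
    π ∈ autSubgroup X ↔ ∀ u v : V, X.Adj (π u) (π v) ↔ X.Adj u v := Iff.rfl

lemma rho_mem_aut (m n : ℕ) (r : (ZMod n)ˣ) :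
    rhoPerm m n ∈ autSubgroup (metaGraph m n r) := by
  intro u v
  rw [meta_adj, meta_adj, rho_apply, rho_apply]
  have hne : (u.1, u.2 + 1) ≠ (v.1, v.2 + 1) ↔ u ≠ v := by
    simp only [ne_eq, Prod.ext_iff, add_left_inj]
  rw [hne]
  have h1 : v.2 + 1 = u.2 + 1 + (r:ZMod n) ^ u.1.val ↔ v.2 = u.2 + (r:ZMod n) ^ u.1.val := by
    rw [add_right_comm, add_left_inj]
  have h2 : u.2 + 1 = v.2 + 1 + (r:ZMod n) ^ v.1.val ↔ u.2 = v.2 + (r:ZMod n) ^ v.1.val := by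
    rw [add_right_comm, add_left_inj]
  rw [h1, h2, add_left_inj]

lemma key_lemma (k p : ℕ) (hk : 2 ≤ k) (hp : p.Prime) (hkp : k < p) (r : (ZMod p)ˣ)
    (α : Equiv.Perm (ZMod k × ZMod p)) (hαaut : α ∈ autSubgroup (metaGraph k p r))
    (e : ℕ) (hαord : α ^ (p ^ e) = 1)
    (hconj : α * rhoPerm k p * α⁻¹ ∈ Subgroup.zpowers (rhoPerm k p)) :
    α ∈ Subgroup.zpowers (rhoPerm k p) := by
  haveI : NeZero k := ⟨by omega⟩
  haveI : NeZero p := ⟨by omega⟩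
  haveI : Fact p.Prime := ⟨hp⟩
  haveI : Fact (1 < k) := ⟨by omega⟩
  have hpe : p ^ e - 1 + 1 = p ^ e := by have h0 : 0 < p ^ e := pow_pos hp.pos e; omega
  obtain ⟨n, hn⟩ := Subgroup.mem_zpowers_iff.mp hconj
  set s : ZMod p := ((n : ℤ) : ZMod p) with hs_def
  -- functional equation
  have hF : ∀ v : ZMod k × ZMod p, α (v.1, v.2 + 1) = ((α v).1, (α v).2 + s) := by
    intro v
    have h1 := congrArg (fun f : Equiv.Perm (ZMod k × ZMod p) => f (α v)) hn
    simp only [Equiv.Perm.mul_apply, Equiv.Perm.inv_def, Equiv.symm_apply_apply] at h1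
    rw [rho_zpow_apply, rho_apply] at h1
    exact h1.symm
  -- main formula
  have hmain : ∀ (i : ZMod k) (j : ZMod p),
      α (i, j) = ((α (i,0)).1, (α (i,0)).2 + j * s) := by
    intro i j
    have hnat : ∀ m : ℕ, α (i, (m : ZMod p)) = ((α (i,0)).1, (α (i,0)).2 + (m:ZMod p) * s) := by
      intro m
      induction m with
      | zero => simp
      | succ m ih =>
        have h2 := hF (i, (m : ZMod p))
        simp only at h2
        rw [ih] at h2
        push_cast
        rw [h2]
        simp only [Prod.mk.injEq, true_and]
        ring
    have h3 := hnat j.val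
    rwa [ZMod.natCast_rightInverse j] at h3
  set ib : ZMod k → ZMod k := fun i => (α (i, 0)).1 with hib_def
  -- iterates of first coordinate
  have hiter : ∀ (t : ℕ) (i : ZMod k) (j : ZMod p), ((α ^ t) (i,j)).1 = ib^[t] i := by
    intro t
    induction t with
    | zero => intro i j; simp
    | succ t ih =>
      intro i j
      rw [pow_succ, Equiv.Perm.mul_apply, hmain i j, ih, Function.iterate_succ_apply]
  have hfix : ∀ i : ZMod k, ib^[p^e] i = i := by
    intro i
    have := hiter (p^e) i 0
    rw [hαord] at this
    simpa using this.symm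
  have hbij : Function.Bijective ib := by
    refine Function.bijective_iff_has_inverse.mpr ⟨ib^[p^e - 1], fun i => ?_, fun i => ?_⟩
    · have h := hfix i
      rw [← hpe, Function.iterate_succ_apply] at h
      exact h
    · have h := hfix i
      rw [← hpe, Function.iterate_succ_apply'] at h
      exact h
  have hib_id : ∀ i, ib i = i := by
    set τ : Equiv.Perm (ZMod k) := Equiv.ofBijective ib hbij with hτ
    have hτpow : τ ^ (p ^ e) = 1 := by
      ext x
      rw [Equiv.Perm.coe_pow]
      simpa [hτ, Equiv.ofBijective] using hfix x
    have h1 : orderOf τ ∣ p ^ e := orderOf_dvd_of_pow_eq_one hτpow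
    have h2 : orderOf τ ∣ Nat.factorial k := by
      have h3 := orderOf_dvd_card (x := τ)
      rwa [Fintype.card_perm, ZMod.card] at h3
    have hcop : Nat.Coprime (p ^ e) (Nat.factorial k) :=
      Nat.Coprime.pow_left e ((Nat.Prime.coprime_iff_not_dvd hp).mpr
        (fun hdvd => by have := (Nat.Prime.dvd_factorial hp).mp hdvd; omega))
    have hτ1 : τ = 1 := orderOf_eq_one_iff.mp (Nat.dvd_one.mp (hcop ▸ Nat.dvd_gcd h1 h2))
    intro i
    have := congrArg (fun σ : Equiv.Perm (ZMod k) => σ i) hτ1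
    simpa [hτ, Equiv.ofBijective] using this
  have hmain' : ∀ (i : ZMod k) (j : ZMod p), α (i, j) = (i, (α (i,0)).2 + j * s) := by
    intro i j
    rw [hmain i j]
    exact congrArg (fun x => (x, _)) (hib_id i)
  -- s = 1
  have hdiff : ∀ (t : ℕ) (i : ZMod k) (x y : ZMod p),
      ((α^t) (i,x)).2 - ((α^t) (i,y)).2 = (x - y) * s ^ t := by
    intro t
    induction t with
    | zero => intro i x y; simp
    | succ t ih =>
      intro i x y
      rw [pow_succ, Equiv.Perm.mul_apply, Equiv.Perm.mul_apply, hmain' i x, hmain' i y,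
        ih i _ _]
      ring
  have hs_pow : s ^ (p ^ e) = 1 := by
    have h4 := hdiff (p^e) 0 1 0
    rw [hαord] at h4
    simpa using h4.symm
  have hs1 : s = 1 := by
    have hunit : IsUnit s := IsUnit.of_mul_eq_one (a := s) (s ^ (p^e - 1)) (by
      rw [← pow_succ', hpe, hs_pow])
    obtain ⟨u, hu⟩ := hunit
    have hu1 : u ^ (p ^ e) = 1 := Units.ext (by
      push_cast [hu]
      exact hs_pow)
    have h1 : orderOf u ∣ p ^ e := orderOf_dvd_of_pow_eq_one hu1
    have h2 : orderOf u ∣ p - 1 := by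
      have h3 := orderOf_dvd_card (x := u)
      rwa [ZMod.card_units] at h3
    have hcop : Nat.Coprime (p ^ e) (p - 1) :=
      Nat.Coprime.pow_left e ((Nat.Prime.coprime_iff_not_dvd hp).mpr
        (fun hdvd => by have := Nat.le_of_dvd (by omega) hdvd; omega))
    have hu_one : u = 1 := orderOf_eq_one_iff.mp (Nat.dvd_one.mp (hcop ▸ Nat.dvd_gcd h1 h2))
    rw [hu_one] at hu
    exact hu.symm
  -- b is constant
  have hb : ∀ i : ZMod k, (α (i+1, 0)).2 = (α (i,0)).2 := by
    intro i
    have hne : (i, (0:ZMod p)) ≠ (i+1, (0:ZMod p)) := by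
      simp only [ne_eq, Prod.mk.injEq, left_eq_add, not_and]
      intro h; exact absurd h one_ne_zero
    have hadj : (metaGraph k p r).Adj (i, 0) (i+1, 0) := by
      rw [meta_adj]
      exact ⟨hne, Or.inr ⟨rfl, Or.inl rfl⟩⟩
    have h5 := (hαaut _ _).mpr hadj
    rw [meta_adj, hmain' i 0, hmain' (i+1) 0] at h5
    obtain ⟨-, h6⟩ := h5
    rcases h6 with ⟨h7, -⟩ | ⟨h7, -⟩
    · exact absurd h7 (by simp only [left_eq_add]; exact one_ne_zero)
    · simpa using h7.symm
  have hb0 : ∀ i : ZMod k, (α (i,0)).2 = (α (0,0)).2 := by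
    intro i
    have hnatb : ∀ m : ℕ, (α ((m : ZMod k), 0)).2 = (α ((0:ZMod k),0)).2 := by
      intro m
      induction m with
      | zero => simp
      | succ m ih =>
        rw [show ((m+1:ℕ):ZMod k) = ((m:ℕ):ZMod k)+1 by push_cast; ring, hb, ih]
    have := hnatb i.val
    rwa [ZMod.natCast_rightInverse i] at this
  refine Subgroup.mem_zpowers_iff.mpr ⟨(((α (0,0)).2).val : ℤ), ?_⟩
  apply Equiv.ext
  rintro ⟨i, j⟩
  rw [rho_zpow_apply, hmain' i j, hs1, hb0 i]
  have : ((((α (0,0)).2.val : ℤ)) : ZMod p) = (α (0,0)).2 := by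
    push_cast
    exact ZMod.natCast_rightInverse ((α (0,0)).2)
  rw [this, mul_one]
  exact congrArg (fun x => (i, x)) (add_comm j ((α (0,0)).2))

/-- For `k ≥ 2`, a prime `p ≡ 1 (mod k)` and `r` a unit of `ℤ/p` of
order `k`: the rotation `ρ(i,j) = (i,j+1)` is an automorphism of `X(k,p;r)`, the
cyclic group `⟨ρ⟩` has order `p` and is a Sylow `p`-subgroup of the automorphism
group of `X(k,p;r)`, and in particular `p²` does not divide the order of the
automorphism group. -/
theorem stmt4 (k p : ℕ) (hk : 2 ≤ k) (hp : p.Prime) (hmod : p ≡ 1 [MOD k])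
    (r : (ZMod p)ˣ) (hord : orderOf r = k) :
    rhoPerm k p ∈ autSubgroup (metaGraph k p r) ∧
    Nat.card (Subgroup.zpowers (rhoPerm k p)) = p ∧
    Subgroup.zpowers (rhoPerm k p) ≤ autSubgroup (metaGraph k p r) ∧
    IsPGroup p (Subgroup.zpowers (rhoPerm k p)) ∧
    (∀ Q : Subgroup (Equiv.Perm (ZMod k × ZMod p)),
      Q ≤ autSubgroup (metaGraph k p r) → IsPGroup p Q →
      Subgroup.zpowers (rhoPerm k p) ≤ Q → Q = Subgroup.zpowers (rhoPerm k p)) ∧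
    ¬ (p ^ 2 ∣ Nat.card (autSubgroup (metaGraph k p r))) := by
  have hkp : k < p := by
    have h1 : p % k = 1 % k := hmod
    have h2 : 1 % k = 1 := Nat.mod_eq_of_lt (by omega)
    have h3 := hp.two_le
    rcases lt_trichotomy p k with h | h | h
    · rw [Nat.mod_eq_of_lt h] at h1; omega
    · subst h; rw [Nat.mod_self] at h1; omega
    · exact h
  haveI : NeZero k := ⟨by omega⟩
  haveI : NeZero p := ⟨by omega⟩
  haveI : Fact p.Prime := ⟨hp⟩
  have part1 : rhoPerm k p ∈ autSubgroup (metaGraph k p r) := rho_mem_aut k p r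
  have hρp : (rhoPerm k p) ^ p = 1 := by
    apply Equiv.ext
    rintro ⟨i, j⟩
    rw [rho_pow_apply]
    simp [ZMod.natCast_self]
  have hρne : rhoPerm k p ≠ 1 := by
    intro h
    have h2 := congrArg (fun f : Equiv.Perm (ZMod k × ZMod p) => (f ((0:ZMod k),(0:ZMod p))).2) h
    simp only [rho_apply, Equiv.Perm.one_apply, zero_add] at h2
    exact one_ne_zero h2
  have hρord : orderOf (rhoPerm k p) = p := by
    rcases hp.eq_one_or_self_of_dvd _ (orderOf_dvd_of_pow_eq_one hρp) with h | h
    · exact absurd (orderOf_eq_one_iff.mp h) hρne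
    · exact h
  have part2 : Nat.card (Subgroup.zpowers (rhoPerm k p)) = p := by
    rw [Nat.card_zpowers, hρord]
  have part3 : Subgroup.zpowers (rhoPerm k p) ≤ autSubgroup (metaGraph k p r) :=
    Subgroup.zpowers_le.mpr part1
  have part4 : IsPGroup p (Subgroup.zpowers (rhoPerm k p)) :=
    IsPGroup.of_card (by rw [part2, pow_one])
  have part5 : ∀ Q : Subgroup (Equiv.Perm (ZMod k × ZMod p)),
      Q ≤ autSubgroup (metaGraph k p r) → IsPGroup p Q →
      Subgroup.zpowers (rhoPerm k p) ≤ Q → Q = Subgroup.zpowers (rhoPerm k p) := by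
    intro Q hQle hQp hRle
    have htop : (Subgroup.zpowers (rhoPerm k p)).subgroupOf Q = ⊤ := by
      by_contra hne
      haveI : Group.IsNilpotent ↥Q := hQp.isNilpotent
      have hlt := normalizerCondition_of_isNilpotent _ (lt_top_iff_ne_top.mpr hne)
      obtain ⟨x, hxN, hxR⟩ := SetLike.exists_of_lt hlt
      apply hxR
      have hρQ : rhoPerm k p ∈ Q := hRle (Subgroup.mem_zpowers _)
      have hρR' : (⟨rhoPerm k p, hρQ⟩ : Q) ∈ (Subgroup.zpowers (rhoPerm k p)).subgroupOf Q :=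
        Subgroup.mem_subgroupOf.mpr (Subgroup.mem_zpowers _)
      have hconj : x * ⟨rhoPerm k p, hρQ⟩ * x⁻¹ ∈ (Subgroup.zpowers (rhoPerm k p)).subgroupOf Q :=
        (Subgroup.mem_normalizer_iff.mp hxN _).mp hρR'
      obtain ⟨e, he⟩ := hQp x
      have hαord : (↑x : Equiv.Perm (ZMod k × ZMod p)) ^ (p ^ e) = 1 := by
        have h := congrArg (fun y : ↥Q => (y : Equiv.Perm (ZMod k × ZMod p))) he
        simpa using h
      have hαconj : (↑x : Equiv.Perm (ZMod k × ZMod p)) * rhoPerm k p * (↑x)⁻¹ ∈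
          Subgroup.zpowers (rhoPerm k p) := by
        have h := Subgroup.mem_subgroupOf.mp hconj
        simpa using h
      exact Subgroup.mem_subgroupOf.mpr
        (key_lemma k p hk hp hkp r ↑x (hQle x.2) e hαord hαconj)
    exact le_antisymm (Subgroup.subgroupOf_eq_top.mp htop) hRle
  refine ⟨part1, part2, part3, part4, part5, ?_⟩
  intro hdvd
  set A := autSubgroup (metaGraph k p r) with hA
  have hρA : rhoPerm k p ∈ A := part1
  have hPsub : IsPGroup p (Subgroup.zpowers (⟨rhoPerm k p, hρA⟩ : A)) := by
    apply IsPGroup.of_card (n := 1)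
    rw [Nat.card_zpowers, pow_one]
    exact (orderOf_injective A.subtype (Subgroup.subtype_injective A)
      ⟨rhoPerm k p, hρA⟩).symm.trans hρord
  obtain ⟨P, hP⟩ := hPsub.exists_le_sylow
  have hQ3 : Subgroup.zpowers (rhoPerm k p) ≤ Subgroup.map A.subtype P := by
    rw [Subgroup.zpowers_le]
    exact ⟨⟨rhoPerm k p, hρA⟩, hP (Subgroup.mem_zpowers _), rfl⟩
  have hQeq := part5 (Subgroup.map A.subtype P) (Subgroup.map_subtype_le (P : Subgroup A))
    (P.isPGroup'.map _) hQ3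
  have hcardP : Nat.card P = p := by
    have h1 : Nat.card (Subgroup.map A.subtype (P : Subgroup A)) = Nat.card P :=
      (Nat.card_congr (Subgroup.equivMapOfInjective (P : Subgroup A) A.subtype
        (Subgroup.subtype_injective A)).toEquiv).symm
    rw [← h1, hQeq, part2]
  have hfac : 2 ≤ (Nat.card A).factorization p := by
    have hne : Nat.card A ≠ 0 := Nat.card_pos.ne'
    exact (Nat.Prime.pow_dvd_iff_le_factorization hp hne).mp hdvd
  have hmul := Sylow.card_eq_multiplicity P
  rw [hcardP] at hmul
  have : (1:ℕ) = (Nat.card A).factorization p := by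
    have := hmul
    nth_rewrite 1 [← pow_one p] at this
    exact Nat.pow_right_injective hp.two_le this
  omega
end

section
/- Let k ≥ 2 be an integer and p a prime with p ≡ 1 (mod k), and let r be a unit of ℤ/pℤ of multiplicative order k. Then the permutations ρ(i,j) = (i, j+1) and σ(i,j) = (i+1, r·j) of ℤ/kℤ × ℤ/pℤ are automorphisms of X(k,p;r), the subgroup ⟨ρ,σ⟩ of the automorphism group acts regularly on the vertex set, and consequently X(k,p;r) is a Cayley graph (of a semidirect product ℤ/pℤ ⋊ ℤ/kℤ). -/
open SimpleGraph

/-- For `k ≥ 2`, a prime `p ≡ 1 (mod k)` and `r` a unit of `ℤ/p` of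
order `k`: the permutations `ρ(i,j) = (i,j+1)` and `σ(i,j) = (i+1, r·j)` are
automorphisms of `X(k,p;r)`, and the subgroup `⟨ρ,σ⟩` of the automorphism group acts
regularly on the vertex set; consequently `X(k,p;r)` is a Cayley graph. -/
theorem stmt5 (k p : ℕ) (hk : 2 ≤ k) (hp : p.Prime) (hmod : p ≡ 1 [MOD k])
    (r : (ZMod p)ˣ) (hord : orderOf r = k) :
    rhoPerm k p ∈ autSubgroup (metaGraph k p r) ∧
    sigmaPerm k p r ∈ autSubgroup (metaGraph k p r) ∧
    Subgroup.closure {rhoPerm k p, sigmaPerm k p r} ≤ autSubgroup (metaGraph k p r) ∧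
    (∀ u v : ZMod k × ZMod p,
      ∃! g : Subgroup.closure {rhoPerm k p, sigmaPerm k p r},
        (g : Equiv.Perm (ZMod k × ZMod p)) u = v) := by
  haveI : Fact (1 < k) := ⟨hk⟩
  haveI : NeZero k := ⟨by omega⟩
  haveI : Fact p.Prime := ⟨hp⟩
  have hordc : orderOf ((r : (ZMod p)ˣ) : ZMod p) = k := by
    rw [orderOf_units, hord]
  have hpow : ∀ a b : ZMod k,
      (r : ZMod p) ^ (a + b).val = (r : ZMod p) ^ a.val * (r : ZMod p) ^ b.val := by
    intro a b
    have h := pow_mod_orderOf (r : ZMod p) (a.val + b.val)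
    rw [hordc] at h
    rw [ZMod.val_add, h, pow_add]
  have hone : (r : ZMod p) ^ ((1 : ZMod k)).val = (r : ZMod p) := by
    rw [ZMod.val_one k, pow_one]
  have hρ : ∀ x : ZMod k × ZMod p, rhoPerm k p x = (x.1, x.2 + 1) := fun x => rfl
  have hσ : ∀ x : ZMod k × ZMod p, sigmaPerm k p r x = (x.1 + 1, (r : ZMod p) * x.2) :=
    fun x => rfl
  have hadj : ∀ u v : ZMod k × ZMod p, (metaGraph k p r).Adj u v ↔ u ≠ v ∧
      (((u.1 = v.1 ∧ v.2 = u.2 + (r : ZMod p) ^ u.1.val) ∨ (u.2 = v.2 ∧ v.1 = u.1 + 1)) ∨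
       ((v.1 = u.1 ∧ u.2 = v.2 + (r : ZMod p) ^ v.1.val) ∨ (v.2 = u.2 ∧ u.1 = v.1 + 1))) :=
    fun u v => Iff.rfl
  -- rho is an automorphism
  have hρmem : rhoPerm k p ∈ autSubgroup (metaGraph k p r) := by
    intro u v
    rw [hadj, hadj, hρ, hρ]
    refine and_congr (by simp [Prod.ext_iff]) (or_congr ?_ ?_) <;>
    · refine or_congr (and_congr Iff.rfl ?_) (and_congr ?_ Iff.rfl) <;>
      · constructor
        · intro h; linear_combination h
        · intro h; linear_combination h
  -- sigma is an automorphism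
  have hσmem : sigmaPerm k p r ∈ autSubgroup (metaGraph k p r) := by
    intro u v
    rw [hadj, hadj, hσ, hσ]
    have hr1 : ∀ a : ZMod k, (r : ZMod p) ^ (a + 1).val = (r : ZMod p) ^ a.val * r := by
      intro a; rw [hpow, hone]
    refine and_congr (by simp [Prod.ext_iff]) (or_congr ?_ ?_) <;>
    · refine or_congr (and_congr (by simp) ?_) (and_congr (Units.mul_right_inj r) (by simp)) <;>
      · rw [hr1]
        constructor
        · intro h
          refine (Units.mul_right_inj r).mp ?_
          linear_combination h
        · intro h; rw [h]; ring
  -- classification of elements of the closure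
  have hclass : ∀ g ∈ Subgroup.closure {rhoPerm k p, sigmaPerm k p r},
      ∃ a : ZMod k, ∃ c : ZMod p, ∀ x : ZMod k × ZMod p,
        g x = (x.1 + a, (r : ZMod p) ^ a.val * x.2 + c) := by
    intro g hg
    induction hg using Subgroup.closure_induction with
    | mem x hx =>
      rcases hx with rfl | rfl
      · exact ⟨0, 1, fun x => by rw [hρ]; simp⟩
      · exact ⟨1, 0, fun x => by rw [hσ, hone]; simp⟩
    | one => exact ⟨0, 0, fun x => by simp⟩
    | mul x y hx hy ihx ihy =>
      obtain ⟨a, c, hxf⟩ := ihx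
      obtain ⟨a', c', hyf⟩ := ihy
      refine ⟨a' + a, (r : ZMod p) ^ a.val * c' + c, fun z => ?_⟩
      rw [Equiv.Perm.mul_apply, hyf, hxf]
      refine Prod.ext ?_ ?_
      · simp; ring
      · simp only []
        rw [hpow]
        ring
    | inv x hx ihx =>
      obtain ⟨a, c, hxf⟩ := ihx
      have hu : (r : ZMod p) ^ (-a).val * (r : ZMod p) ^ a.val = 1 := by
        rw [← hpow]; simp
      refine ⟨-a, -((r : ZMod p) ^ (-a).val * c), fun z => ?_⟩
      have := hxf (x⁻¹ z)
      rw [show x (x⁻¹ z) = z from Equiv.apply_symm_apply x z] at this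
      have h1 : (x⁻¹ z).1 = z.1 + -a := by
        have := congrArg Prod.fst this; simp at this; linear_combination -this
      have h2 : (x⁻¹ z).2 = (r : ZMod p) ^ (-a).val * z.2 + -((r : ZMod p) ^ (-a).val * c) := by
        have h3 := congrArg Prod.snd this
        simp only [] at h3
        have h4 : (r : ZMod p) ^ (-a).val * ((r : ZMod p) ^ a.val * (x⁻¹ z).2 + c)
            = (r : ZMod p) ^ (-a).val * z.2 := by rw [h3]
        rw [mul_add, ← mul_assoc, hu, one_mul] at h4
        linear_combination h4
      exact Prod.ext h1 h2
  -- power formulas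
  have hρn : ∀ (n : ℕ) (x : ZMod k × ZMod p), ((rhoPerm k p) ^ n) x = (x.1, x.2 + n) := by
    intro n
    induction n with
    | zero => intro x; simp
    | succ n ih =>
      intro x
      rw [pow_succ, Equiv.Perm.mul_apply, ih, hρ]
      show ((x.1 : ZMod k), x.2 + 1 + (n : ZMod p)) = (x.1, x.2 + ((n + 1 : ℕ) : ZMod p))
      exact Prod.ext rfl (by push_cast; ring)
  have hσn : ∀ (n : ℕ) (x : ZMod k × ZMod p),
      ((sigmaPerm k p r) ^ n) x = (x.1 + n, (r : ZMod p) ^ n * x.2) := by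
    intro n
    induction n with
    | zero => intro x; simp
    | succ n ih =>
      intro x
      rw [pow_succ, Equiv.Perm.mul_apply, hσ, ih]
      show (x.1 + 1 + (n : ZMod k), (r : ZMod p) ^ n * ((r : ZMod p) * x.2))
          = (x.1 + ((n + 1 : ℕ) : ZMod k), (r : ZMod p) ^ (n + 1) * x.2)
      exact Prod.ext (by push_cast; ring) (by push_cast; ring)
  refine ⟨hρmem, hσmem, (Subgroup.closure_le _).mpr ?_, ?_⟩
  · rintro x (rfl | rfl)
    · exact hρmem
    · exact hσmem
  · intro u v
    set H := Subgroup.closure {rhoPerm k p, sigmaPerm k p r} with hH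
    have hρH : rhoPerm k p ∈ H := Subgroup.subset_closure (Set.mem_insert _ _)
    have hσH : sigmaPerm k p r ∈ H := Subgroup.subset_closure (Set.mem_insert_of_mem _ rfl)
    set a : ℕ := (v.1 - u.1).val with ha
    set b : ℕ := (((r⁻¹ : (ZMod p)ˣ) : ZMod p) ^ a * v.2 - u.2).val with hb
    have hmem : sigmaPerm k p r ^ a * rhoPerm k p ^ b ∈ H :=
      mul_mem (pow_mem hσH a) (pow_mem hρH b)
    have hrr : (r : ZMod p) ^ a * ((r⁻¹ : (ZMod p)ˣ) : ZMod p) ^ a = 1 := by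
      rw [← mul_pow]
      norm_cast
      simp
    have happ : (sigmaPerm k p r ^ a * rhoPerm k p ^ b) u = v := by
      rw [Equiv.Perm.mul_apply, hρn, hσn]
      refine Prod.ext ?_ ?_
      · simp only [ha]
        rw [ZMod.natCast_val, ZMod.cast_id]
        ring
      · simp only [hb]
        rw [ZMod.natCast_val, ZMod.cast_id]
        rw [show u.2 + (((r⁻¹ : (ZMod p)ˣ) : ZMod p) ^ a * v.2 - u.2)
            = ((r⁻¹ : (ZMod p)ˣ) : ZMod p) ^ a * v.2 by ring, ← mul_assoc, hrr, one_mul]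
    refine ⟨⟨_, hmem⟩, happ, ?_⟩
    rintro ⟨g, hg⟩ hgu
    obtain ⟨a1, c1, h1⟩ := hclass g hg
    obtain ⟨a2, c2, h2⟩ := hclass _ hmem
    have key : g u = (sigmaPerm k p r ^ a * rhoPerm k p ^ b) u := by
      simp only at hgu; rw [hgu, happ]
    rw [h1, h2] at key
    have e1 : a1 = a2 := by
      have := congrArg Prod.fst key; simp at this; linear_combination this
    have e2 : c1 = c2 := by
      have := congrArg Prod.snd key
      simp only [] at this
      rw [e1] at this
      linear_combination this
    refine Subtype.ext (Equiv.ext fun x => ?_)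
    rw [h1, h2, e1, e2]
end

section
/- For every integer k ≥ 2 and every natural number N, there exists a Cayley graph X with more than N vertices whose Hamilton compression satisfies κ(X) = k. (In particular, for each k ≥ 2 there exist infinitely many Cayley graphs with Hamilton compression equal to k.) -/
open SimpleGraph

set_option linter.unusedSectionVars false

namespace Stmt6

variable (m p : ℕ) (r : (ZMod p)ˣ)

def step (i : ZMod m) : ZMod p := (r : ZMod p) ^ i.val

def MG : SimpleGraph (ZMod m × ZMod p) where
  Adj u v := u ≠ v ∧ (u.2 = v.2 ∨
    (u.1 = v.1 ∧ (v.2 - u.2 = step m p r u.1 ∨ u.2 - v.2 = step m p r u.1)))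
  symm := by
    constructor
    rintro u v ⟨huv, h | ⟨h1, h2⟩⟩
    · exact ⟨Ne.symm huv, Or.inl h.symm⟩
    · exact ⟨Ne.symm huv, Or.inr ⟨h1.symm, by rw [← h1]; tauto⟩⟩
  loopless := by constructor; rintro u ⟨h, -⟩; exact h rfl

/-- the affine maps `(i,j) ↦ (i+a, r^a j + b)` -/
def aff (a : ZMod m) (b : ZMod p) : Equiv.Perm (ZMod m × ZMod p) where
  toFun u := (u.1 + a, ((r ^ a.val : (ZMod p)ˣ) : ZMod p) * u.2 + b)
  invFun u := (u.1 - a, (((r ^ a.val : (ZMod p)ˣ)⁻¹ : (ZMod p)ˣ) : ZMod p) * (u.2 - b))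
  left_inv u := by
    ext
    · simp
    · simp only [add_sub_cancel_right]
      exact Units.inv_mul_cancel_left _ _
  right_inv u := by
    ext
    · simp
    · simp only []
      rw [Units.mul_inv_cancel_left, sub_add_cancel]


/-- partial geometric sums (negated) -/
def B : ℕ → ZMod p := fun t => -∑ u ∈ Finset.range t, (r : ZMod p) ^ u

/-- the Hamilton cycle, as a function on `ℕ` -/
def cN (t : ℕ) : ZMod m × ZMod p :=
  (((t / p : ℕ) : ZMod m), (r : ZMod p) ^ (t / p) * ((t : ℕ) : ZMod p) + B p r (t / p))


def cycC [NeZero m] [NeZero p] : ZMod (Fintype.card (ZMod m × ZMod p)) → ZMod m × ZMod p :=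
  fun I => cN m p r I.val

variable {m p r}

section Basic

variable [NeZero m] [NeZero p] [Fact p.Prime]

lemma step_ne_zero (i : ZMod m) : step m p r i ≠ 0 :=
  pow_ne_zero _ (Units.ne_zero r)

lemma adj_col {i i' : ZMod m} {j : ZMod p} (h : i ≠ i') :
    (MG m p r).Adj (i, j) (i', j) :=
  ⟨by simp [Prod.ext_iff, h], Or.inl rfl⟩

lemma adj_right {i : ZMod m} {j j' : ZMod p} (h : j' = j + step m p r i) :
    (MG m p r).Adj (i, j) (i, j') := by
  refine ⟨?_, Or.inr ⟨rfl, Or.inl (by rw [h]; ring)⟩⟩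
  simp only [Prod.mk.injEq, ne_eq, not_and]
  intro _
  rw [h]
  intro hc
  exact step_ne_zero i (by linear_combination -hc)

lemma adj_left {i : ZMod m} {j j' : ZMod p} (h : j' = j - step m p r i) :
    (MG m p r).Adj (i, j) (i, j') :=
  ((MG m p r).adj_symm (adj_right (i := i) (by rw [h]; ring)) : _)

/-- dichotomy for edges -/
lemma adj_cases {u v : ZMod m × ZMod p} (h : (MG m p r).Adj u v) :
    (u.2 = v.2 ∧ u.1 ≠ v.1) ∨
      (u.1 = v.1 ∧ u.2 ≠ v.2 ∧
        (v.2 = u.2 + step m p r u.1 ∨ u.2 = v.2 + step m p r u.1)) := by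
  obtain ⟨hne, h | ⟨h1, h2⟩⟩ := h
  · refine Or.inl ⟨h, fun hc => hne (Prod.ext hc h)⟩
  · refine Or.inr ⟨h1, fun hc => hne (Prod.ext h1 hc), ?_⟩
    rcases h2 with h2 | h2
    · exact Or.inl (by linear_combination h2)
    · exact Or.inr (by linear_combination h2)

lemma pow_coe (t : ℕ) : ((r ^ t : (ZMod p)ˣ) : ZMod p) = (r : ZMod p) ^ t := by
  simp

lemma pow_zmod_mod (hr : r ^ m = 1) (t : ℕ) :
    (r : ZMod p) ^ t = (r : ZMod p) ^ (t % m) := by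
  conv_lhs => rw [← Nat.div_add_mod t m]
  rw [pow_add, pow_mul]
  have : (r : ZMod p) ^ m = 1 := by
    rw [← pow_coe]; rw [hr]; simp
  rw [this, one_pow, one_mul]

lemma step_add (hr : r ^ m = 1) (i a : ZMod m) :
    step m p r (i + a) = (r : ZMod p) ^ a.val * step m p r i := by
  unfold step
  rw [ZMod.val_add, ← pow_zmod_mod hr, Nat.add_comm, pow_add]

lemma aff_apply (a : ZMod m) (b : ZMod p) (u : ZMod m × ZMod p) :
    aff m p r a b u = (u.1 + a, (r : ZMod p) ^ a.val * u.2 + b) := by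
  simp [aff, pow_coe]

lemma R_add (hr : r ^ m = 1) (a a' : ZMod m) :
    (r : ZMod p) ^ (a + a').val = (r : ZMod p) ^ a.val * (r : ZMod p) ^ a'.val := by
  rw [ZMod.val_add, ← pow_zmod_mod hr, pow_add]

lemma aff_mul (hr : r ^ m = 1) (a a' : ZMod m) (b b' : ZMod p) :
    aff m p r a b * aff m p r a' b'
      = aff m p r (a + a') ((r : ZMod p) ^ a.val * b' + b) := by
  ext u
  · simp [aff_apply, Equiv.Perm.mul_apply, add_comm, add_assoc, add_left_comm]
  · simp only [Equiv.Perm.mul_apply, aff_apply]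
    rw [R_add hr]
    ring

lemma aff_one : (aff m p r 0 0) = 1 := by
  ext u
  · simp [aff_apply]
  · simp [aff_apply, ZMod.val_zero]

lemma aff_adj (hr : r ^ m = 1) (a : ZMod m) (b : ZMod p) {u v : ZMod m × ZMod p}
    (h : (MG m p r).Adj u v) : (MG m p r).Adj (aff m p r a b u) (aff m p r a b v) := by
  obtain ⟨hne, hcase⟩ := h
  refine ⟨fun hc => hne ((aff m p r a b).injective hc), ?_⟩
  rw [aff_apply, aff_apply]
  rcases hcase with h | ⟨h1, h2⟩
  · exact Or.inl (by simp only [h])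
  · refine Or.inr ⟨by simp only [h1], ?_⟩
    have hs : step m p r (u.1 + a) = (r : ZMod p) ^ a.val * step m p r u.1 :=
      step_add hr u.1 a
    simp only [hs]
    rcases h2 with h2 | h2
    · exact Or.inl (by rw [← h2]; ring)
    · exact Or.inr (by rw [← h2]; ring)

lemma aff_mem_aut (hr : r ^ m = 1) (a : ZMod m) (b : ZMod p) :
    aff m p r a b ∈ autSubgroup (MG m p r) := by
  intro u v
  constructor
  · intro h
    have hinv := aff_adj hr (-a) (-((r : ZMod p) ^ (-a).val * b)) h
    have hid : ∀ w, aff m p r (-a) (-((r : ZMod p) ^ (-a).val * b)) (aff m p r a b w) = w := by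
      intro w
      have hmm : aff m p r (-a) (-((r : ZMod p) ^ (-a).val * b)) * aff m p r a b = 1 := by
        rw [aff_mul hr]
        rw [show (r : ZMod p) ^ (-a).val * b + -((r : ZMod p) ^ (-a).val * b) = 0 by ring]
        rw [neg_add_cancel]
        exact aff_one
      calc aff m p r (-a) (-((r : ZMod p) ^ (-a).val * b)) (aff m p r a b w)
          = (aff m p r (-a) (-((r : ZMod p) ^ (-a).val * b)) * aff m p r a b) w := rfl
        _ = w := by rw [hmm]; rfl
    rwa [hid, hid] at hinv
  · exact aff_adj hr a b

end Basic

section Reg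

variable [NeZero m] [NeZero p] [Fact p.Prime]

/-- the regular subgroup of affine maps -/
def HH (hr : r ^ m = 1) : Subgroup (Equiv.Perm (ZMod m × ZMod p)) where
  carrier := {π | ∃ a b, π = aff m p r a b}
  one_mem' := ⟨0, 0, aff_one.symm⟩
  mul_mem' := by
    rintro π₁ π₂ ⟨a, b, rfl⟩ ⟨a', b', rfl⟩
    exact ⟨a + a', _, aff_mul hr a a' b b'⟩
  inv_mem' := by
    rintro π ⟨a, b, rfl⟩
    refine ⟨-a, -((r : ZMod p) ^ (-a).val * b), ?_⟩
    apply inv_eq_of_mul_eq_one_right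
    rw [aff_mul hr, add_neg_cancel]
    have h1 : (r : ZMod p) ^ a.val * (r : ZMod p) ^ (-a).val = 1 := by
      rw [← R_add hr, add_neg_cancel, ZMod.val_zero, pow_zero]
    rw [show (r : ZMod p) ^ a.val * -((r : ZMod p) ^ (-a).val * b) + b
        = -((r : ZMod p) ^ a.val * ((r : ZMod p) ^ (-a).val)) * b + b by ring, h1]
    rw [show ((-1) * b + b : ZMod p) = 0 by ring]
    exact aff_one

lemma HH_le_aut (hr : r ^ m = 1) : HH (m := m) (p := p) (r := r) hr ≤ autSubgroup (MG m p r) := by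
  rintro π ⟨a, b, rfl⟩
  exact aff_mem_aut hr a b

lemma HH_regular (hr : r ^ m = 1) (u v : ZMod m × ZMod p) :
    ∃! g : HH (m := m) (p := p) (r := r) hr, (g : Equiv.Perm (ZMod m × ZMod p)) u = v := by
  refine ⟨⟨aff m p r (v.1 - u.1) (v.2 - (r : ZMod p) ^ (v.1 - u.1).val * u.2),
      ⟨_, _, rfl⟩⟩, ?_, ?_⟩
  · show aff m p r (v.1 - u.1) (v.2 - (r : ZMod p) ^ (v.1 - u.1).val * u.2) u = v
    rw [aff_apply]
    apply Prod.ext <;> simp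
  · rintro ⟨g, a, b, rfl⟩ hg
    have h2 := hg
    rw [aff_apply] at h2
    have ha : a = v.1 - u.1 := by
      have := congrArg Prod.fst h2
      simp only at this
      linear_combination this
    subst ha
    have hb : b = v.2 - (r : ZMod p) ^ (v.1 - u.1).val * u.2 := by
      have := congrArg Prod.snd h2
      simp only at this
      linear_combination this
    subst hb
    rfl

end Reg

section Ham

variable [NeZero m] [NeZero p] [Fact p.Prime]

lemma B_succ (t : ℕ) : B p r (t + 1) = B p r t - (r : ZMod p) ^ t := by
  unfold B
  rw [Finset.sum_range_succ]
  ring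

lemma B_zero : B p r 0 = 0 := by simp [B]

lemma r_coe_ne_one (hr1 : r ≠ 1) : (r : ZMod p) ≠ 1 := by
  intro h
  exact hr1 (Units.ext (by simpa using h))

lemma r_coe_pow_m (hr : r ^ m = 1) : (r : ZMod p) ^ m = 1 := by
  rw [← pow_coe, hr]; simp

lemma B_m_eq_zero (hr : r ^ m = 1) (hr1 : r ≠ 1) : B p r m = 0 := by
  unfold B
  rw [geom_sum_eq (r_coe_ne_one hr1), r_coe_pow_m hr]
  simp

lemma B_mul (t : ℕ) : (r : ZMod p) * B p r t - 1 = B p r (t + 1) := by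
  unfold B
  have h : ∑ k ∈ Finset.range t, (r : ZMod p) ^ (k + 1)
      = (r : ZMod p) * ∑ u ∈ Finset.range t, (r : ZMod p) ^ u := by
    rw [Finset.mul_sum]
    exact Finset.sum_congr rfl (fun u _ => by rw [pow_succ]; ring)
  rw [Finset.sum_range_succ']
  simp only [pow_zero]
  linear_combination h

lemma val_one' (hm : 2 ≤ m) : (1 : ZMod m).val = 1 := by
  rw [ZMod.val_one_eq_one_mod, Nat.mod_eq_of_lt (by omega)]

lemma one_ne_zero_zmod (hm : 2 ≤ m) : (1 : ZMod m) ≠ 0 := by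
  intro h
  have h2 := congrArg ZMod.val h
  rw [val_one' hm, ZMod.val_zero] at h2
  omega

lemma step_cast (hr : r ^ m = 1) (q : ℕ) :
    step m p r ((q : ℕ) : ZMod m) = (r : ZMod p) ^ q := by
  unfold step
  rw [ZMod.val_natCast, ← pow_zmod_mod hr]

lemma cN_adj (hm : 2 ≤ m) (hr : r ^ m = 1) (t : ℕ) (ht : t + 1 < m * p) :
    (MG m p r).Adj (cN m p r t) (cN m p r (t + 1)) := by
  have hp0 : 0 < p := (Fact.out : p.Prime).pos
  by_cases hdvd : p ∣ (t + 1)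
  · -- column step
    have hq : (t + 1) / p = t / p + 1 := by
      rw [Nat.succ_div, if_pos hdvd]
    have htm : ((t : ℕ) : ZMod p) = (((t + 1 : ℕ) : ZMod p)) - 1 := by
      push_cast
      ring
    have ht1 : (((t + 1 : ℕ)) : ZMod p) = 0 := by
      rw [ZMod.natCast_eq_zero_iff]
      exact hdvd
    have h2 : cN m p r (t + 1) = (((t / p : ℕ) : ZMod m) + 1, B p r (t / p + 1)) := by
      unfold cN
      rw [hq, ht1]
      push_cast
      simp [mul_zero]
    have h1 : cN m p r t = (((t / p : ℕ) : ZMod m), B p r (t / p + 1)) := by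
      unfold cN
      rw [htm, ht1, B_succ]
      simp
      ring
    rw [h1, h2]
    exact adj_col (by
      intro hc
      exact one_ne_zero_zmod hm (by linear_combination -hc))
  · -- horizontal step
    have hq : (t + 1) / p = t / p := by
      rw [Nat.succ_div, if_neg hdvd]
      omega
    have h2 : cN m p r (t + 1)
        = (((t / p : ℕ) : ZMod m),
            ((r : ZMod p) ^ (t / p) * ((t : ℕ) : ZMod p) + B p r (t / p))
              + step m p r ((t / p : ℕ) : ZMod m)) := by
      unfold cN
      rw [hq, step_cast hr]
      push_cast
      apply Prod.ext
      · rfl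
      · simp only
        ring
    have h1 : cN m p r t
        = (((t / p : ℕ) : ZMod m), (r : ZMod p) ^ (t / p) * ((t : ℕ) : ZMod p) + B p r (t / p)) :=
      rfl
    rw [h1, h2]
    exact adj_right rfl

lemma cN_zero : cN m p r 0 = (0, 0) := by
  unfold cN
  simp [B_zero]

lemma mul_split (hm : 2 ≤ m) : (m - 1) * p + p = m * p := by
  have h : (m - 1) + 1 = m := by omega
  calc (m - 1) * p + p = ((m - 1) + 1) * p := by ring
  _ = m * p := by rw [h]

lemma cN_last (hm : 2 ≤ m) (hp1 : 1 < p) (hr : r ^ m = 1) (hr1 : r ≠ 1) :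
    cN m p r (m * p - 1) = (((m - 1 : ℕ) : ZMod m), 0) := by
  have hp0 : 0 < p := by omega
  have hsplit := mul_split (p := p) hm
  have ht : m * p - 1 = (p - 1) + (m - 1) * p := by omega
  have hq : (m * p - 1) / p = m - 1 := by
    rw [ht, Nat.add_mul_div_right _ _ hp0, Nat.div_eq_of_lt (by omega)]
    omega
  have hcast : ((m * p - 1 : ℕ) : ZMod p) = -1 := by
    have hh : (m * p - 1) + 1 = m * p := by omega
    have h2 : ((m * p - 1 : ℕ) : ZMod p) + 1 = ((m * p : ℕ) : ZMod p) := by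
      rw [← hh]
      push_cast
      ring
    have h3 : ((m * p : ℕ) : ZMod p) = 0 := by
      rw [ZMod.natCast_eq_zero_iff]
      exact dvd_mul_left p m
    rw [h3] at h2
    linear_combination h2
  unfold cN
  rw [hq, hcast]
  have hBm : B p r ((m - 1) + 1) = 0 := by
    have h4 : (m - 1) + 1 = m := by omega
    rw [h4]
    exact B_m_eq_zero hr hr1
  rw [B_succ] at hBm
  apply Prod.ext
  · rfl
  · simp only
    linear_combination hBm

lemma cN_wrap (hm : 2 ≤ m) (hp1 : 1 < p) (hr : r ^ m = 1) (hr1 : r ≠ 1) :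
    (MG m p r).Adj (cN m p r (m * p - 1)) (cN m p r 0) := by
  rw [cN_zero, cN_last hm hp1 hr hr1]
  apply adj_col
  intro hc
  rw [ZMod.natCast_eq_zero_iff] at hc
  have := Nat.le_of_dvd (by omega) hc
  omega

lemma cN_inj (hm : 2 ≤ m) (t t' : ℕ) (ht : t < m * p) (ht' : t' < m * p)
    (h : cN m p r t = cN m p r t') : t = t' := by
  have hp0 : 0 < p := (Fact.out : p.Prime).pos
  have hq : t / p < m := Nat.div_lt_of_lt_mul (by rwa [mul_comm m p] at ht)
  have hq' : t' / p < m := Nat.div_lt_of_lt_mul (by rwa [mul_comm m p] at ht')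
  have h1 := congrArg Prod.fst h
  have h2 := congrArg Prod.snd h
  unfold cN at h1 h2
  simp only at h1 h2
  have hqq : t / p = t' / p := by
    have := congrArg ZMod.val h1
    rwa [ZMod.val_cast_of_lt hq, ZMod.val_cast_of_lt hq'] at this
  rw [← hqq] at h2
  have hmod : ((t : ℕ) : ZMod p) = ((t' : ℕ) : ZMod p) := by
    have hrq : (r : ZMod p) ^ (t / p) ≠ 0 := pow_ne_zero _ (Units.ne_zero r)
    have h3 : (r : ZMod p) ^ (t / p) * (((t : ℕ) : ZMod p) - ((t' : ℕ) : ZMod p)) = 0 := by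
      linear_combination h2
    rcases mul_eq_zero.mp h3 with h4 | h4
    · exact absurd h4 hrq
    · linear_combination h4
  have hmm : t % p = t' % p := by
    rwa [ZMod.natCast_eq_natCast_iff, Nat.ModEq] at hmod
  have e1 := Nat.div_add_mod t p
  have e2 : p * (t / p) + t' % p = t' := by rw [hqq]; exact Nat.div_add_mod t' p
  omega

lemma cN_shift (hm : 2 ≤ m) (hr : r ^ m = 1) (t : ℕ) (ht : t + p < m * p) :
    aff m p r 1 (-1) (cN m p r t) = cN m p r (t + p) := by
  have hp0 : 0 < p := (Fact.out : p.Prime).pos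
  rw [aff_apply]
  unfold cN
  have hq : (t + p) / p = t / p + 1 := by
    rw [Nat.add_div_right _ hp0]
  have hc1 : ((t + p : ℕ) : ZMod p) = ((t : ℕ) : ZMod p) := by
    push_cast
    simp [ZMod.natCast_self]
  rw [hq, hc1]
  apply Prod.ext
  · simp only
    push_cast
    ring
  · simp only
    rw [val_one' hm, pow_one, ← B_mul, pow_succ]
    ring

lemma cN_shift_wrap (hm : 2 ≤ m) (hr : r ^ m = 1) (hr1 : r ≠ 1) (t : ℕ)
    (ht : t < m * p) (ht2 : m * p ≤ t + p) :
    aff m p r 1 (-1) (cN m p r t) = cN m p r (t + p - m * p) := by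
  have hp0 : 0 < p := (Fact.out : p.Prime).pos
  have hsplit := mul_split (p := p) hm
  have hlow : (m - 1) * p ≤ t := by omega
  have hq : t / p = m - 1 := by
    have h1 : m - 1 ≤ t / p := (Nat.le_div_iff_mul_le hp0).2 hlow
    have h2 : t / p < m := Nat.div_lt_of_lt_mul (by rwa [mul_comm m p] at ht)
    omega
  have htlt : t + p - m * p < p := by omega
  have hq' : (t + p - m * p) / p = 0 := Nat.div_eq_of_lt htlt
  have hcast : ((t + p - m * p : ℕ) : ZMod p) = ((t : ℕ) : ZMod p) := by
    have hsplit2 : t = (t + p - m * p) + (m - 1) * p := by omega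
    conv_rhs => rw [hsplit2]
    push_cast
    simp [ZMod.natCast_self]
  rw [aff_apply]
  unfold cN
  rw [hq, hq', hcast]
  apply Prod.ext
  · simp only
    have h5 : ((m - 1 : ℕ) : ZMod m) + 1 = ((m : ℕ) : ZMod m) := by
      have h1 : (m - 1) + 1 = m := by omega
      rw [← h1]
      push_cast
      ring
    rw [h5, ZMod.natCast_self]
    simp
  · simp only
    rw [val_one' hm, pow_one, pow_zero, one_mul]
    have hBm : B p r ((m - 1) + 1) = 0 := by
      have h1 : (m - 1) + 1 = m := by omega
      rw [h1]
      exact B_m_eq_zero hr hr1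
    have hrm : (r : ZMod p) * (r : ZMod p) ^ (m - 1) = 1 := by
      have h1 : (m - 1) + 1 = m := by omega
      calc (r : ZMod p) * (r : ZMod p) ^ (m - 1) = (r : ZMod p) ^ (m - 1) * (r : ZMod p) :=
            mul_comm _ _
      _ = (r : ZMod p) ^ ((m - 1) + 1) := (pow_succ _ _).symm
      _ = (r : ZMod p) ^ m := by rw [h1]
      _ = 1 := r_coe_pow_m hr
    have hBB := B_mul (p := p) (r := r) (m - 1)
    rw [hBm] at hBB
    rw [B_zero]
    calc (r : ZMod p) * ((r : ZMod p) ^ (m - 1) * ((t : ℕ) : ZMod p) + B p r (m - 1)) + (-1)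
        = ((r : ZMod p) * (r : ZMod p) ^ (m - 1)) * ((t : ℕ) : ZMod p)
          + ((r : ZMod p) * B p r (m - 1) - 1) := by ring
    _ = ((t : ℕ) : ZMod p) + 0 := by rw [hrm, hBB]; ring
    _ = ((t : ℕ) : ZMod p) + 0 := by ring

end Ham


section Lift

variable [NeZero m] [NeZero p] [Fact p.Prime]

lemma card_V : Fintype.card (ZMod m × ZMod p) = m * p := by
  rw [Fintype.card_prod, ZMod.card, ZMod.card]

lemma card_V_nezero : NeZero (Fintype.card (ZMod m × ZMod p)) :=
  ⟨by rw [card_V]; exact Nat.mul_ne_zero (NeZero.ne m) (NeZero.ne p)⟩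

lemma cycC_bij (hm : 2 ≤ m) : Function.Bijective (cycC m p r) := by
  haveI := card_V_nezero (m := m) (p := p)
  have hinj : Function.Injective (cycC m p r) := by
    intro I I' h
    have h1 : I.val < m * p := by rw [← card_V]; exact ZMod.val_lt I
    have h2 : I'.val < m * p := by rw [← card_V]; exact ZMod.val_lt I'
    exact ZMod.val_injective _ (cN_inj hm _ _ h1 h2 h)
  refine (Fintype.bijective_iff_injective_and_card _).mpr ⟨hinj, ?_⟩
  rw [ZMod.card]

lemma cast_val_eq_self (n : ℕ) [NeZero n] (I : ZMod n) : ((I.val : ℕ) : ZMod n) = I :=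
  ZMod.natCast_zmod_val I

lemma cycC_adj (hm : 2 ≤ m) (hp1 : 1 < p) (hr : r ^ m = 1) (hr1 : r ≠ 1) (I : ZMod (Fintype.card (ZMod m × ZMod p))) :
    (MG m p r).Adj (cycC m p r I) (cycC m p r (I + 1)) := by
  haveI := card_V_nezero (m := m) (p := p)
  have h1 : I.val < m * p := by rw [← card_V]; exact ZMod.val_lt I
  by_cases h : I.val + 1 < m * p
  · have hval : (I + 1).val = I.val + 1 := by
      have e : I + 1 = ((I.val + 1 : ℕ) : ZMod (Fintype.card (ZMod m × ZMod p))) := by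
        push_cast [cast_val_eq_self]
        ring
      rw [e, ZMod.val_cast_of_lt (by have hcv := card_V (m := m) (p := p); omega)]
    show (MG m p r).Adj (cN m p r I.val) (cN m p r (I + 1).val)
    rw [hval]
    exact cN_adj hm hr _ h
  · have hlast : I.val = m * p - 1 := by omega
    have e : I + 1 = 0 := by
      have e1 : I = ((I.val : ℕ) : ZMod (Fintype.card (ZMod m × ZMod p))) :=
        (cast_val_eq_self _ I).symm
      rw [e1, hlast]
      have : ((m * p - 1 : ℕ) : ZMod (Fintype.card (ZMod m × ZMod p))) + 1
          = ((m * p : ℕ) : ZMod (Fintype.card (ZMod m × ZMod p))) := by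
        have h2 : (m * p - 1) + 1 = m * p := by
          have := Nat.mul_pos (by omega : 0 < m) (by omega : 0 < p)
          omega
        rw [← h2]
        push_cast
        ring
      rw [this, ← card_V, ZMod.natCast_self]
    rw [e]
    show (MG m p r).Adj (cN m p r I.val) (cN m p r (0 : ZMod _).val)
    rw [ZMod.val_zero, hlast]
    exact cN_wrap hm hp1 hr hr1

lemma cycC_shift (hm : 2 ≤ m) (hr : r ^ m = 1) (hr1 : r ≠ 1)
    (I : ZMod (Fintype.card (ZMod m × ZMod p))) :
    aff m p r 1 (-1) (cycC m p r I)
      = cycC m p r (I + ((p : ℕ) : ZMod (Fintype.card (ZMod m × ZMod p)))) := by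
  haveI := card_V_nezero (m := m) (p := p)
  have h1 : I.val < m * p := by rw [← card_V]; exact ZMod.val_lt I
  by_cases h : I.val + p < m * p
  · have hval : (I + ((p : ℕ) : ZMod (Fintype.card (ZMod m × ZMod p)))).val = I.val + p := by
      have e : I + ((p : ℕ) : ZMod (Fintype.card (ZMod m × ZMod p)))
          = ((I.val + p : ℕ) : ZMod (Fintype.card (ZMod m × ZMod p))) := by
        push_cast [cast_val_eq_self]
        ring
      rw [e, ZMod.val_cast_of_lt (by have hcv := card_V (m := m) (p := p); omega)]
    show aff m p r 1 (-1) (cN m p r I.val)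
      = cN m p r (I + ((p : ℕ) : ZMod (Fintype.card (ZMod m × ZMod p)))).val
    rw [hval]
    exact cN_shift hm hr _ h
  · have hval : (I + ((p : ℕ) : ZMod (Fintype.card (ZMod m × ZMod p)))).val
        = I.val + p - m * p := by
      have e0 : I.val + p = (I.val + p - m * p) + m * p := by omega
      have hz : ((m * p : ℕ) : ZMod (Fintype.card (ZMod m × ZMod p))) = 0 := by
        rw [← card_V]
        exact ZMod.natCast_self _
      have e : I + ((p : ℕ) : ZMod (Fintype.card (ZMod m × ZMod p)))
          = ((I.val + p - m * p : ℕ) : ZMod (Fintype.card (ZMod m × ZMod p))) := by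
        have e1 : I + ((p : ℕ) : ZMod (Fintype.card (ZMod m × ZMod p)))
            = ((I.val + p : ℕ) : ZMod (Fintype.card (ZMod m × ZMod p))) := by
          push_cast [cast_val_eq_self]
          ring
        rw [e1]
        conv_lhs => rw [e0]
        rw [Nat.cast_add, hz, add_zero]
      refine (e ▸ ZMod.val_cast_of_lt ?_)
      calc I.val + p - m * p < p := by omega
      _ ≤ m * p := Nat.le_mul_of_pos_left p (by omega)
      _ = Fintype.card (ZMod m × ZMod p) := (card_V).symm
    show aff m p r 1 (-1) (cN m p r I.val)
      = cN m p r (I + ((p : ℕ) : ZMod (Fintype.card (ZMod m × ZMod p)))).val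
    rw [hval]
    exact cN_shift_wrap hm hr hr1 _ h1 (by omega)

lemma lower_bound (hm : 2 ≤ m) (hp1 : 1 < p) (hr : r ^ m = 1) (hr1 : r ≠ 1) :
    IsHamCycle (MG m p r) (cycC m p r) ∧ IsSymmHamCycle (MG m p r) (cycC m p r) m := by
  have hdvd : m ∣ Fintype.card (ZMod m × ZMod p) := by
    rw [card_V]; exact dvd_mul_right m p
  have hquot : Fintype.card (ZMod m × ZMod p) / m = p := by
    rw [card_V]; exact Nat.mul_div_cancel_left p (by omega)
  refine ⟨⟨cycC_bij hm, cycC_adj hm hp1 hr hr1⟩, hdvd, aff m p r 1 (-1), aff_mem_aut hr 1 (-1), ?_⟩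
  intro I
  rw [hquot]
  exact cycC_shift hm hr hr1 I

end Lift

section Rigid

variable [NeZero m] [NeZero p] [Fact p.Prime]

lemma adj_of_col {u w : ZMod m × ZMod p} (h1 : u.2 = w.2) (h2 : u.1 ≠ w.1) :
    (MG m p r).Adj u w :=
  ⟨fun hc => h2 (by rw [hc]), Or.inl h1⟩

lemma adj_of_horiz {u w : ZMod m × ZMod p} (h1 : u.1 = w.1)
    (h2 : w.2 = u.2 + step m p r u.1 ∨ u.2 = w.2 + step m p r u.1) :
    (MG m p r).Adj u w := by
  refine ⟨?_, Or.inr ⟨h1, ?_⟩⟩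
  · intro hc
    subst hc
    rcases h2 with h2 | h2 <;>
      exact step_ne_zero (r := r) u.1 (by linear_combination -h2)
  · rcases h2 with h2 | h2
    · exact Or.inl (by linear_combination h2)
    · exact Or.inr (by linear_combination h2)

lemma natlike_ne_zero (hp4 : 4 < p) (a : ℕ) (ha : 0 < a) (ha4 : a ≤ 4) :
    ((a : ℕ) : ZMod p) ≠ 0 := by
  intro h
  rw [ZMod.natCast_eq_zero_iff] at h
  have := Nat.le_of_dvd ha h
  omega

lemma nsmul_step_ne_zero (hp4 : 4 < p) (i : ZMod m) (a : ℕ) (ha : 0 < a) (ha4 : a ≤ 4) :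
    ((a : ℕ) : ZMod p) * step m p r i ≠ 0 := by
  intro h
  rcases mul_eq_zero.mp h with h | h
  · exact natlike_ne_zero hp4 a ha ha4 h
  · exact step_ne_zero (r := r) i h

lemma mne_cast_ne (hm : 2 ≤ m) (a : ℕ) (ha : 0 < a) (ham : a < m) :
    ((a : ℕ) : ZMod m) ≠ 0 := by
  intro h
  rw [ZMod.natCast_eq_zero_iff] at h
  have := Nat.le_of_dvd ha h
  omega

/-- for `m ≥ 3`: an edge is a column edge iff its endpoints have a common neighbor -/
lemma col_char (hm3 : 3 ≤ m) (hp4 : 4 < p) {u v : ZMod m × ZMod p} (h : (MG m p r).Adj u v) :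
    u.2 = v.2 ↔ ∃ w, (MG m p r).Adj u w ∧ (MG m p r).Adj v w := by
  have hm : 2 ≤ m := by omega
  have h1ne : (1 : ZMod m) ≠ 0 := one_ne_zero_zmod hm
  have h2ne : ((2 : ℕ) : ZMod m) ≠ 0 := mne_cast_ne hm 2 (by omega) (by omega)
  constructor
  · intro hc
    rcases adj_cases h with ⟨-, h1⟩ | ⟨-, h2, -⟩
    swap
    · exact absurd hc h2
    by_cases hx : v.1 = u.1 + 1
    · refine ⟨(u.1 + ((2 : ℕ) : ZMod m), u.2), adj_of_col rfl ?_, adj_of_col hc.symm ?_⟩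
      · intro hc2
        exact h2ne (by linear_combination -hc2)
      · rw [hx]
        intro hc2
        have : ((2 : ℕ) : ZMod m) = 1 := by push_cast at hc2 ⊢; linear_combination -hc2
        exact h1ne (by push_cast at this ⊢; linear_combination this)
    · refine ⟨(u.1 + 1, u.2), adj_of_col rfl ?_, adj_of_col hc.symm ?_⟩
      · intro hc2
        exact h1ne (by linear_combination -hc2)
      · exact fun hc2 => hx hc2
  · rintro ⟨w, hw1, hw2⟩
    by_contra hne
    rcases adj_cases h with ⟨h2, -⟩ | ⟨heq1, -, hstep⟩
    · exact hne h2
    rcases adj_cases hw1 with ⟨c1, d1⟩ | ⟨c1, d1, e1⟩ <;>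
      rcases adj_cases hw2 with ⟨c2, d2⟩ | ⟨c2, d2, e2⟩
    · exact hne (by rw [c1, c2])
    · exact d1 (by rw [heq1, c2])
    · exact d2 (by rw [← heq1, c1])
    · -- both horizontal
      rw [← heq1] at e2
      set s := step m p r u.1 with hs
      have hsne : s ≠ 0 := step_ne_zero u.1
      have h3ne : ((3 : ℕ) : ZMod p) * s ≠ 0 := nsmul_step_ne_zero hp4 u.1 3 (by omega) (by omega)
      rcases hstep with hA | hA <;> rcases e1 with hB | hB <;> rcases e2 with hC | hC
      · exact hne (by linear_combination hC - hB)
      · exact hsne (by linear_combination hA - hB - hC)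
      · exact h3ne (by push_cast; linear_combination -hA - hB - hC)
      · exact hne (by linear_combination hB - hC)
      · exact hsne (by linear_combination -hA - hB + hC)
      · exact h3ne (by push_cast; linear_combination -hA - hB - hC)
      · exact hsne (by linear_combination hA - hB - hC)
      · exact hne (by linear_combination hB - hC)

end Rigid

section Rigid2

variable [NeZero m] [NeZero p] [Fact p.Prime]

lemma r_eq_neg_one (hm2 : m = 2) (hr : r ^ m = 1) (hr1 : r ≠ 1) : (r : ZMod p) = -1 := by
  subst hm2
  have h2 : (r : ZMod p) ^ 2 = 1 := r_coe_pow_m hr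
  have h3 : ((r : ZMod p) - 1) * ((r : ZMod p) + 1) = 0 := by linear_combination h2
  rcases mul_eq_zero.mp h3 with h4 | h4
  · exact absurd (by linear_combination h4) (r_coe_ne_one hr1)
  · linear_combination h4

lemma step_flip (hm2 : m = 2) (hr : r ^ m = 1) (hr1 : r ≠ 1) (i : ZMod m) :
    step m p r (i + 1) = - step m p r i := by
  have hrn := r_eq_neg_one hm2 hr hr1
  subst hm2
  have hcase : i = 0 ∨ i = 1 := by revert i; decide
  rcases hcase with rfl | rfl
  · show (r : ZMod p) ^ (0 + 1 : ZMod 2).val = -(r : ZMod p) ^ (0 : ZMod 2).val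
    have e1 : ((0 : ZMod 2) + 1).val = 1 := by decide
    have e0 : (0 : ZMod 2).val = 0 := by decide
    rw [e1, e0, pow_one, pow_zero, hrn]
  · show (r : ZMod p) ^ (1 + 1 : ZMod 2).val = -(r : ZMod p) ^ (1 : ZMod 2).val
    have e1 : ((1 : ZMod 2) + 1).val = 0 := by decide
    have e0 : (1 : ZMod 2).val = 1 := by decide
    rw [e1, e0, pow_one, pow_zero, hrn]
    ring

/-- for `m = 2` (the prism): an edge is a column edge iff there are two distinct
"parallel paths" of length 3 from one endpoint to the other. -/
lemma vert_char (hm2 : m = 2) (hp4 : 4 < p) (hr : r ^ m = 1) (hr1 : r ≠ 1)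
    {u v : ZMod m × ZMod p} (h : (MG m p r).Adj u v) :
    u.2 = v.2 ↔ ∃ x y x' y' : ZMod m × ZMod p,
      ((MG m p r).Adj u x ∧ (MG m p r).Adj x y ∧ (MG m p r).Adj y v ∧ x ≠ v ∧ y ≠ u) ∧
      ((MG m p r).Adj u x' ∧ (MG m p r).Adj x' y' ∧ (MG m p r).Adj y' v ∧ x' ≠ v ∧ y' ≠ u) ∧
      (x ≠ x' ∨ y ≠ y') := by
  have hsflip := step_flip hm2 hr hr1
  have hcomp : ∀ i i' : ZMod m, i ≠ i' → i' = i + 1 := by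
    subst hm2; decide
  have honeZ : (1 : ZMod m) ≠ 0 := by subst hm2; decide
  set s := step m p r u.1 with hs
  have hsne : s ≠ 0 := step_ne_zero u.1
  have h2s : ((2 : ℕ) : ZMod p) * s ≠ 0 := nsmul_step_ne_zero hp4 u.1 2 (by omega) (by omega)
  have h3s : ((3 : ℕ) : ZMod p) * s ≠ 0 := nsmul_step_ne_zero hp4 u.1 3 (by omega) (by omega)
  have h4s : ((4 : ℕ) : ZMod p) * s ≠ 0 := nsmul_step_ne_zero hp4 u.1 4 (by omega) (by omega)
  constructor
  · intro hc
    rcases adj_cases h with ⟨-, d1⟩ | ⟨-, h2, -⟩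
    swap
    · exact absurd hc h2
    have hv1 : v.1 = u.1 + 1 := hcomp _ _ d1
    refine ⟨(u.1, u.2 + s), (v.1, u.2 + s), (u.1, u.2 - s), (v.1, u.2 - s),
      ⟨adj_of_horiz rfl (Or.inl rfl), adj_of_col rfl d1, ?_, ?_, ?_⟩,
      ⟨adj_of_horiz rfl (Or.inr (by ring)), adj_of_col rfl d1, ?_, ?_, ?_⟩,
      Or.inl ?_⟩
    · refine adj_of_horiz rfl (Or.inl ?_)
      show v.2 = u.2 + s + step m p r v.1
      rw [hv1, hsflip]
      linear_combination -hc
    · intro hx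
      have h5 := congrArg Prod.fst hx
      exact d1 h5
    · intro hy
      have h5 := congrArg Prod.fst hy
      exact d1 h5.symm
    · refine adj_of_horiz rfl (Or.inr ?_)
      show u.2 - s = v.2 + step m p r v.1
      rw [hv1, hsflip]
      linear_combination hc
    · intro hx
      have h5 := congrArg Prod.fst hx
      exact d1 h5
    · intro hy
      have h5 := congrArg Prod.fst hy
      exact d1 h5.symm
    · intro hxx
      have := congrArg Prod.snd hxx
      simp only at this
      exact h2s (by push_cast; linear_combination this)
  · rintro ⟨x, y, x', y', ⟨P1a, P1b, P1c, P1d, P1e⟩, ⟨P2a, P2b, P2c, P2d, P2e⟩, hdiff⟩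
    by_contra hne
    rcases adj_cases h with ⟨h2, -⟩ | ⟨heq, -, hstep⟩
    · exact hne h2
    have key : ∀ z w : ZMod m × ZMod p, (MG m p r).Adj u z → (MG m p r).Adj z w →
        (MG m p r).Adj w v → z ≠ v → w ≠ u → z = (u.1 + 1, u.2) ∧ w = (u.1 + 1, v.2) := by
      intro z w Qa Qb Qc Qd Qe
      rcases adj_cases Qa with ⟨cx, dx⟩ | ⟨cx, -, ex⟩ <;>
        rcases adj_cases Qc with ⟨cy, dy⟩ | ⟨cy, -, ey⟩
      · -- both column
        refine ⟨Prod.ext (hcomp u.1 z.1 dx) cx.symm, Prod.ext ?_ cy⟩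
        show w.1 = u.1 + 1
        rw [hcomp v.1 w.1 (fun hh => dy hh.symm), heq]
      · -- z column, w horizontal
        exfalso
        have hz : z.1 = u.1 + 1 := hcomp u.1 z.1 dx
        have hw1 : w.1 = u.1 := by rw [cy, ← heq]
        rcases adj_cases Qb with ⟨cxy, dxy⟩ | ⟨cxy, -, -⟩
        · -- z,w column : w = u
          exact Qe (Prod.ext hw1 (by rw [← cxy, ← cx]))
        · -- z,w horizontal : layers differ
          rw [hz, hw1] at cxy
          exact honeZ (by linear_combination cxy)
      · -- z horizontal, w column
        exfalso
        have hzv1 : z.1 = v.1 := by rw [← cx, heq]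
        rcases adj_cases Qb with ⟨cxy, dxy⟩ | ⟨cxy, -, -⟩
        · -- column between z w : z.2 = w.2 = v.2, so z = v
          exact Qd (Prod.ext hzv1 (cxy.trans cy))
        · -- horizontal between z w : layers differ
          have hw1 : w.1 = v.1 + 1 := hcomp v.1 w.1 (fun hh => dy hh.symm)
          rw [hw1, hzv1] at cxy
          exact honeZ (by linear_combination -cxy)
      · -- both horizontal
        exfalso
        have hz1 : z.1 = u.1 := cx.symm
        have hw1 : w.1 = u.1 := by rw [cy, ← heq]
        have hstepw : step m p r w.1 = s := by rw [hw1]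
        have hstepz : step m p r z.1 = s := by rw [hz1]
        rw [hstepw] at ey
        have hxv2 : z.2 ≠ v.2 := fun hh => Qd (Prod.ext (by rw [hz1, heq]) hh)
        have hyu2 : w.2 ≠ u.2 := fun hh => Qe (Prod.ext hw1 hh)
        rcases adj_cases Qb with ⟨-, dxy⟩ | ⟨-, -, exy⟩
        · exact dxy (by rw [hz1, hw1])
        rw [hstepz] at exy
        rcases hstep with hA | hA <;> rcases ex with hB | hB <;>
          rcases ey with hC | hC <;> rcases exy with hD | hD
        · exact hyu2 (by linear_combination hA - hC)
        · exact hyu2 (by linear_combination hA - hC)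
        · exact hxv2 (by linear_combination hB - hA)
        · exact hxv2 (by linear_combination hB - hA)
        · exact hyu2 (by linear_combination hA - hC)
        · exact hyu2 (by linear_combination hA - hC)
        · exact h2s (by push_cast; linear_combination hD - hB - hC - hA)
        · exact h4s (by push_cast; linear_combination -hA - hB - hC - hD)
        · exact h4s (by push_cast; linear_combination -hA - hB - hC - hD)
        · exact hyu2 (by linear_combination hB - hD)
        · exact hyu2 (by linear_combination hC - hA)
        · exact hyu2 (by linear_combination hC - hA)
        · exact hxv2 (by linear_combination hA - hB)
        · exact hxv2 (by linear_combination hA - hB)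
        · exact hyu2 (by linear_combination hC - hA)
        · exact hyu2 (by linear_combination hC - hA)
    obtain ⟨e1, e2⟩ := key x y P1a P1b P1c P1d P1e
    obtain ⟨e3, e4⟩ := key x' y' P2a P2b P2c P2d P2e
    rcases hdiff with hd | hd
    · exact hd (by rw [e1, e3])
    · exact hd (by rw [e2, e4])

end Rigid2

section Rigid3

variable [NeZero m] [NeZero p] [Fact p.Prime]

/-- every automorphism preserves the column/horizontal edge types -/
lemma aut_pres_col (hm : 2 ≤ m) (hp4 : 4 < p) (hr : r ^ m = 1) (hr1 : r ≠ 1)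
    {β : Equiv.Perm (ZMod m × ZMod p)} (hβ : β ∈ autSubgroup (MG m p r))
    {u v : ZMod m × ZMod p} (h : (MG m p r).Adj u v) :
    u.2 = v.2 ↔ (β u).2 = (β v).2 := by
  have hadj' : (MG m p r).Adj (β u) (β v) := (hβ u v).mpr h
  rcases Nat.lt_or_ge m 3 with hm2 | hm3
  · have hm2 : m = 2 := by omega
    rw [vert_char hm2 hp4 hr hr1 h, vert_char hm2 hp4 hr hr1 hadj']
    constructor
    · rintro ⟨x, y, x', y', ⟨a1, a2, a3, a4, a5⟩, ⟨b1, b2, b3, b4, b5⟩, hd⟩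
      refine ⟨β x, β y, β x', β y',
        ⟨(hβ u x).mpr a1, (hβ x y).mpr a2, (hβ y v).mpr a3,
          fun hc => a4 (β.injective hc), fun hc => a5 (β.injective hc)⟩,
        ⟨(hβ u x').mpr b1, (hβ x' y').mpr b2, (hβ y' v).mpr b3,
          fun hc => b4 (β.injective hc), fun hc => b5 (β.injective hc)⟩, ?_⟩
      rcases hd with hd | hd
      · exact Or.inl (fun hc => hd (β.injective hc))
      · exact Or.inr (fun hc => hd (β.injective hc))
    · rintro ⟨x, y, x', y', ⟨a1, a2, a3, a4, a5⟩, ⟨b1, b2, b3, b4, b5⟩, hd⟩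
      refine ⟨β.symm x, β.symm y, β.symm x', β.symm y', ⟨?_, ?_, ?_, ?_, ?_⟩,
        ⟨?_, ?_, ?_, ?_, ?_⟩, ?_⟩
      · exact (hβ u (β.symm x)).mp (by rwa [β.apply_symm_apply])
      · exact (hβ (β.symm x) (β.symm y)).mp (by rwa [β.apply_symm_apply, β.apply_symm_apply])
      · exact (hβ (β.symm y) v).mp (by rwa [β.apply_symm_apply])
      · intro hc; exact a4 (by rw [← hc, β.apply_symm_apply])
      · intro hc; exact a5 (by rw [← hc, β.apply_symm_apply])
      · exact (hβ u (β.symm x')).mp (by rwa [β.apply_symm_apply])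
      · exact (hβ (β.symm x') (β.symm y')).mp (by rwa [β.apply_symm_apply, β.apply_symm_apply])
      · exact (hβ (β.symm y') v).mp (by rwa [β.apply_symm_apply])
      · intro hc; exact b4 (by rw [← hc, β.apply_symm_apply])
      · intro hc; exact b5 (by rw [← hc, β.apply_symm_apply])
      · rcases hd with hd | hd
        · exact Or.inl (fun hc => hd (by rw [← β.apply_symm_apply x, hc, β.apply_symm_apply]))
        · exact Or.inr (fun hc => hd (by rw [← β.apply_symm_apply y, hc, β.apply_symm_apply]))
  · rw [col_char hm3 hp4 h, col_char hm3 hp4 hadj']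
    constructor
    · rintro ⟨w, hw1, hw2⟩
      exact ⟨β w, (hβ u w).mpr hw1, (hβ v w).mpr hw2⟩
    · rintro ⟨w, hw1, hw2⟩
      refine ⟨β.symm w, ?_, ?_⟩
      · exact (hβ u (β.symm w)).mp (by rwa [β.apply_symm_apply])
      · exact (hβ v (β.symm w)).mp (by rwa [β.apply_symm_apply])

/-- every automorphism maps layers to layers -/
lemma aut_layer (hm : 2 ≤ m) (hp4 : 4 < p) (hr : r ^ m = 1) (hr1 : r ≠ 1)
    {β : Equiv.Perm (ZMod m × ZMod p)} (hβ : β ∈ autSubgroup (MG m p r))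
    (u v : ZMod m × ZMod p) (huv : u.1 = v.1) : (β u).1 = (β v).1 := by
  obtain ⟨i, x⟩ := u
  obtain ⟨i', y⟩ := v
  simp only at huv
  subst huv
  set s := step m p r i with hs
  have hsne : s ≠ 0 := step_ne_zero i
  have key : ∀ t : ℕ, (β (i, x + (t : ZMod p) * s)).1 = (β (i, x)).1 := by
    intro t
    induction t with
    | zero => simp
    | succ t ih =>
      have hadj : (MG m p r).Adj (i, x + (t : ZMod p) * s) (i, x + ((t + 1 : ℕ) : ZMod p) * s) := by
        refine adj_of_horiz rfl (Or.inl ?_)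
        show x + ((t + 1 : ℕ) : ZMod p) * s = x + (t : ZMod p) * s + step m p r i
        push_cast
        ring
      have himg := (hβ _ _).mpr hadj
      have hcol := aut_pres_col hm hp4 hr hr1 hβ hadj
      rcases adj_cases himg with ⟨hc, -⟩ | ⟨hc, -, -⟩
      · exfalso
        have hne2 : ((i, x + (t : ZMod p) * s) : ZMod m × ZMod p).2
            ≠ ((i, x + ((t + 1 : ℕ) : ZMod p) * s) : ZMod m × ZMod p).2 := by
          show x + (t : ZMod p) * s ≠ x + ((t + 1 : ℕ) : ZMod p) * s
          intro hcc
          apply hsne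
          have : ((t + 1 : ℕ) : ZMod p) * s - (t : ZMod p) * s = 0 := by linear_combination -hcc
          push_cast at this
          linear_combination this
        exact hne2 (hcol.mpr hc)
      · rw [← hc, ih]
  have hex : ∃ t : ℕ, x + (t : ZMod p) * s = y := by
    refine ⟨((y - x) * (((r ^ i.val : (ZMod p)ˣ)⁻¹ : (ZMod p)ˣ) : ZMod p)).val, ?_⟩
    rw [ZMod.natCast_zmod_val]
    have hss : s = ((r ^ i.val : (ZMod p)ˣ) : ZMod p) := by
      rw [hs]; unfold step; rw [pow_coe]
    rw [hss]
    rw [Units.inv_mul_cancel_right]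
    ring
  obtain ⟨t, ht⟩ := hex
  rw [← ht]
  exact (key t).symm

end Rigid3

section Rigid4

variable [NeZero m] [NeZero p] [Fact p.Prime]

/-- an automorphism of order dividing `p` fixes every layer -/
lemma layer_fix (hm : 2 ≤ m) (hmp : m < p) (hp4 : 4 < p) (hr : r ^ m = 1) (hr1 : r ≠ 1)
    {β : Equiv.Perm (ZMod m × ZMod p)} (hβ : β ∈ autSubgroup (MG m p r))
    (hpow : β ^ p = 1) (u : ZMod m × ZMod p) : (β u).1 = u.1 := by
  classical
  set φ : ZMod m → ZMod m := fun i => (β (i, 0)).1 with hφ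
  have hβ1 : ∀ w : ZMod m × ZMod p, (β w).1 = φ w.1 := by
    intro w
    exact aut_layer hm hp4 hr hr1 hβ w (w.1, 0) rfl
  have hφinj : Function.Injective φ := by
    intro i i' hii
    by_contra hne
    have hinj : Function.Injective
        (fun z : ZMod p ⊕ ZMod p =>
          (Sum.elim (fun j => β (i, j)) (fun j => β (i', j)) z).2) := by
      rintro (a | a) (b | b) hab <;> simp only [Sum.elim_inl, Sum.elim_inr] at hab
      · have : β (i, a) = β (i, b) := by
          apply Prod.ext ?_ hab
          rw [hβ1 (i, a), hβ1 (i, b)]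
        have := β.injective this
        rw [Prod.mk.injEq] at this
        rw [this.2]
      · exfalso
        have : β (i, a) = β (i', b) := by
          apply Prod.ext ?_ hab
          rw [hβ1 (i, a), hβ1 (i', b)]
          exact hii
        have := β.injective this
        rw [Prod.mk.injEq] at this
        exact hne this.1
      · exfalso
        have : β (i', a) = β (i, b) := by
          apply Prod.ext ?_ hab
          rw [hβ1 (i', a), hβ1 (i, b)]
          exact hii.symm
        have := β.injective this
        rw [Prod.mk.injEq] at this
        exact hne this.1.symm
      · have : β (i', a) = β (i', b) := by
          apply Prod.ext ?_ hab
          rw [hβ1 (i', a), hβ1 (i', b)]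
        have := β.injective this
        rw [Prod.mk.injEq] at this
        rw [this.2]
    have hcard := Fintype.card_le_of_injective _ hinj
    simp only [Fintype.card_sum, ZMod.card] at hcard
    omega
  have hφbij : Function.Bijective φ := (Finite.injective_iff_bijective).mp hφinj
  set φe : Equiv.Perm (ZMod m) := Equiv.ofBijective φ hφbij with hφe
  have hφe1 : ∀ w : ZMod m × ZMod p, (β w).1 = φe w.1 := hβ1
  have hiter : ∀ (t : ℕ) (w : ZMod m × ZMod p), ((β ^ t) w).1 = (φe ^ t) w.1 := by
    intro t
    induction t with
    | zero => intro w; simp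
    | succ t ih =>
      intro w
      rw [pow_succ, pow_succ]
      have : (β ^ t * β) w = (β ^ t) (β w) := rfl
      rw [this]
      show ((β ^ t) (β w)).1 = (φe ^ t) (φe w.1)
      rw [ih (β w), hφe1 w]
  have hφp : φe ^ p = 1 := by
    ext i
    have := hiter p (i, 0)
    rw [hpow] at this
    exact this.symm
  have hord : orderOf φe ∣ p := orderOf_dvd_of_pow_eq_one hφp
  have hp : p.Prime := Fact.out
  rcases (Nat.Prime.eq_one_or_self_of_dvd hp _ hord).symm with h1 | h1
  · exfalso
    have hcard : orderOf φe ∣ Fintype.card (Equiv.Perm (ZMod m)) := orderOf_dvd_card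
    rw [h1, Fintype.card_perm, ZMod.card] at hcard
    have := (Nat.Prime.dvd_factorial hp).mp hcard
    omega
  · have : φe = 1 := orderOf_eq_one_iff.mp h1
    rw [hβ1 u, show φ = (φe : ZMod m → ZMod m) from rfl, this]
    rfl

end Rigid4

section LemmaA

variable [NeZero m] [NeZero p] [Fact p.Prime]

/-- no Hamilton cycle is rotated by `m` positions by a layer-preserving automorphism -/
lemma no_m_rot (hm : 2 ≤ m) (hmp : m < p)
    {β : Equiv.Perm (ZMod m × ZMod p)}
    (hlayer : ∀ u : ZMod m × ZMod p, (β u).1 = u.1)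
    {c' : ZMod (Fintype.card (ZMod m × ZMod p)) → ZMod m × ZMod p}
    (hham : IsHamCycle (MG m p r) c')
    (hrot : ∀ I, β (c' I) = c' (I + ((m : ℕ) : ZMod (Fintype.card (ZMod m × ZMod p))))) :
    False := by
  classical
  haveI := card_V_nezero (m := m) (p := p)
  have hcv := card_V (m := m) (p := p)
  have hp0 : 0 < p := (Fact.out : p.Prime).pos
  obtain ⟨⟨hinj, hsurj⟩, hadj⟩ := hham
  have hperiod : ∀ J, (c' (J + ((m : ℕ) : ZMod (Fintype.card (ZMod m × ZMod p))))).1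
      = (c' J).1 := by
    intro J
    rw [← hrot J, hlayer]
  -- the layer depends only on the index mod m
  set Lf : ZMod m → ZMod m :=
    fun a => (c' ((a.val : ℕ) : ZMod (Fintype.card (ZMod m × ZMod p)))).1 with hLfdef
  have hper2 : ∀ (s : ℕ) (u : ℕ),
      (c' ((u + m * s : ℕ) : ZMod (Fintype.card (ZMod m × ZMod p)))).1
        = (c' ((u : ℕ) : ZMod (Fintype.card (ZMod m × ZMod p)))).1 := by
    intro s
    induction s with
    | zero => intro u; norm_num
    | succ s ih =>
      intro u
      have e : ((u + m * (s + 1) : ℕ) : ZMod (Fintype.card (ZMod m × ZMod p)))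
          = ((u + m * s : ℕ) : ZMod (Fintype.card (ZMod m × ZMod p)))
            + ((m : ℕ) : ZMod (Fintype.card (ZMod m × ZMod p))) := by
        push_cast
        ring
      rw [e, hperiod, ih]
  have hLf : ∀ I : ZMod (Fintype.card (ZMod m × ZMod p)),
      (c' I).1 = Lf ((I.val : ℕ) : ZMod m) := by
    intro I
    have h1 : (((I.val : ℕ) : ZMod m)).val = I.val % m := ZMod.val_natCast _ _
    rw [hLfdef]
    simp only
    rw [h1]
    have h2 : I.val % m + m * (I.val / m) = I.val := Nat.mod_add_div _ _
    conv_lhs => rw [← ZMod.natCast_zmod_val I, ← h2]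
    exact hper2 (I.val / m) (I.val % m)
  -- fibers of the reduction map have size p
  have fibG : ∀ a : ZMod m,
      (Finset.univ.filter
        (fun I : ZMod (Fintype.card (ZMod m × ZMod p)) => ((I.val : ℕ) : ZMod m) = a)).card
        = p := by
    intro a
    rw [← Fintype.card_subtype]
    have hequiv : Fin p ≃ {I : ZMod (Fintype.card (ZMod m × ZMod p)) //
        ((I.val : ℕ) : ZMod m) = a} := by
      have ham : a.val < m := ZMod.val_lt a
      refine ⟨fun s => ⟨((a.val + m * (s : ℕ) : ℕ) : ZMod (Fintype.card (ZMod m × ZMod p))), ?_⟩,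
        fun I => ⟨I.1.val / m, ?_⟩, ?_, ?_⟩
      · have hlt : a.val + m * (s : ℕ) < m * p := by
          calc a.val + m * (s : ℕ) < m + m * (s : ℕ) := by omega
          _ = m * ((s : ℕ) + 1) := by ring
          _ ≤ m * p := Nat.mul_le_mul_left m (by omega)
        have hval : (((a.val + m * (s : ℕ) : ℕ) :
            ZMod (Fintype.card (ZMod m × ZMod p)))).val = a.val + m * (s : ℕ) := by
          apply ZMod.val_cast_of_lt
          omega
        rw [hval]
        push_cast
        rw [ZMod.natCast_self]
        rw [ZMod.natCast_zmod_val]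
        ring
      · have h3 : I.1.val < m * p := by
          have := ZMod.val_lt I.1
          omega
        exact Nat.div_lt_of_lt_mul h3
      · intro s
        ext
        simp only
        have hlt : a.val + m * (s : ℕ) < m * p := by
          calc a.val + m * (s : ℕ) < m + m * (s : ℕ) := by omega
          _ = m * ((s : ℕ) + 1) := by ring
          _ ≤ m * p := Nat.mul_le_mul_left m (by omega)
        rw [ZMod.val_cast_of_lt (by omega), Nat.add_mul_div_left _ _ (by omega : 0 < m),
          Nat.div_eq_of_lt ham]
        omega
      · rintro ⟨I, hI⟩
        apply Subtype.ext
        simp only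
        have h4 : a.val = I.val % m := by
          rw [← hI, ZMod.val_natCast]
        rw [h4, Nat.mod_add_div, ZMod.natCast_zmod_val]
    rw [← Fintype.card_congr hequiv, Fintype.card_fin]
  -- each layer is hit p times
  have hlayercount : ∀ y : ZMod m,
      (Finset.univ.filter
        (fun I : ZMod (Fintype.card (ZMod m × ZMod p)) => (c' I).1 = y)).card = p := by
    intro y
    rw [← Fintype.card_subtype]
    have he1 : {I : ZMod (Fintype.card (ZMod m × ZMod p)) // (c' I).1 = y}
        ≃ {v : ZMod m × ZMod p // v.1 = y} :=
      (Equiv.ofBijective c' ⟨hinj, hsurj⟩).subtypeEquiv (fun I => Iff.rfl)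
    have he2 : {v : ZMod m × ZMod p // v.1 = y} ≃ ZMod p := by
      refine ⟨fun v => v.1.2, fun j => ⟨(y, j), rfl⟩, ?_, ?_⟩
      · rintro ⟨⟨i, j⟩, hv⟩
        simp only at hv
        subst hv
        rfl
      · intro j
        rfl
    rw [Fintype.card_congr (he1.trans he2), ZMod.card]
  -- therefore Lf is injective
  have hLfinj : Function.Injective Lf := by
    have hone : ∀ y : ZMod m,
        (Finset.univ.filter (fun a : ZMod m => Lf a = y)).card * p = p := by
      intro y
      have hsum := Finset.card_eq_sum_card_fiberwise
        (f := fun I : ZMod (Fintype.card (ZMod m × ZMod p)) => ((I.val : ℕ) : ZMod m))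
        (s := Finset.univ.filter
          (fun I : ZMod (Fintype.card (ZMod m × ZMod p)) => (c' I).1 = y))
        (t := Finset.univ.filter (fun a : ZMod m => Lf a = y))
        (by
          intro I hI
          simp only [Finset.mem_coe, Finset.mem_filter, Finset.mem_univ, true_and] at hI ⊢
          rw [← hLf]
          exact hI)
      rw [hlayercount y] at hsum
      have hterm : ∀ b ∈ Finset.univ.filter (fun a : ZMod m => Lf a = y),
          ((Finset.univ.filter
            (fun I : ZMod (Fintype.card (ZMod m × ZMod p)) => (c' I).1 = y)).filter
              (fun I => ((I.val : ℕ) : ZMod m) = b)).card = p := by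
        intro b hb
        simp only [Finset.mem_filter, Finset.mem_univ, true_and] at hb
        rw [Finset.filter_filter]
        have : ∀ I : ZMod (Fintype.card (ZMod m × ZMod p)),
            ((c' I).1 = y ∧ ((I.val : ℕ) : ZMod m) = b) ↔ ((I.val : ℕ) : ZMod m) = b := by
          intro I
          constructor
          · exact fun h => h.2
          · intro h
            exact ⟨by rw [hLf, h, hb], h⟩
        rw [Finset.filter_congr (fun I _ => this I)]
        exact fibG b
      rw [Finset.sum_congr rfl hterm, Finset.sum_const, smul_eq_mul] at hsum
      omega
    intro a a' haa
    by_contra hne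
    have h2 : 2 ≤ (Finset.univ.filter (fun b : ZMod m => Lf b = Lf a)).card := by
      apply Finset.one_lt_card.mpr
      exact ⟨a, by simp, a', by simp [haa], hne⟩
    have := hone (Lf a)
    have hp1 : (Finset.univ.filter (fun b : ZMod m => Lf b = Lf a)).card = 1 := by
      have h6 := hone (Lf a)
      have h7 : (Finset.univ.filter (fun b : ZMod m => Lf b = Lf a)).card * p = 1 * p := by
        rw [one_mul]; exact h6
      exact Nat.eq_of_mul_eq_mul_right hp0 h7
    omega
  -- consecutive layers differ
  have hconsec : ∀ I, (c' (I + 1)).1 ≠ (c' I).1 := by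
    intro I hc
    rw [hLf, hLf] at hc
    have hval1 : (((I + 1).val : ℕ) : ZMod m) = ((I.val : ℕ) : ZMod m) + 1 := by
      have : ((I + 1).val : ZMod m) = ZMod.castHom
          (show (m : ℕ) ∣ Fintype.card (ZMod m × ZMod p) by
            rw [hcv]; exact dvd_mul_right m p) (ZMod m) (I + 1) := by
        rw [ZMod.natCast_val, ZMod.castHom_apply]
      rw [this, map_add, map_one]
      congr 1
      rw [ZMod.natCast_val, ZMod.castHom_apply]
    rw [hval1] at hc
    have := hLfinj hc
    exact one_ne_zero_zmod hm (by linear_combination this)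
  -- hence all steps are column steps and the second coordinate is constant
  have hjconst : ∀ I, (c' (I + 1)).2 = (c' I).2 := by
    intro I
    rcases adj_cases (hadj I) with ⟨hc, -⟩ | ⟨hc, -, -⟩
    · exact hc.symm
    · exact absurd hc.symm (hconsec I)
  have hjnat : ∀ t : ℕ, (c' ((t : ℕ) : ZMod (Fintype.card (ZMod m × ZMod p)))).2
      = (c' 0).2 := by
    intro t
    induction t with
    | zero => norm_num
    | succ t ih =>
      have e : ((t + 1 : ℕ) : ZMod (Fintype.card (ZMod m × ZMod p)))
          = ((t : ℕ) : ZMod (Fintype.card (ZMod m × ZMod p))) + 1 := by push_cast; ring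
      rw [e, hjconst, ih]
  have hjall : ∀ I, (c' I).2 = (c' 0).2 := by
    intro I
    conv_lhs => rw [← ZMod.natCast_zmod_val I]
    exact hjnat I.val
  -- contradiction
  have h1 : (c' (((m : ℕ) : ZMod (Fintype.card (ZMod m × ZMod p))))).1 = (c' 0).1 := by
    have := hperiod 0
    rwa [zero_add] at this
  have h2 : (c' (((m : ℕ) : ZMod (Fintype.card (ZMod m × ZMod p))))).2 = (c' 0).2 :=
    hjall _
  have h3 : (((m : ℕ) : ZMod (Fintype.card (ZMod m × ZMod p)))) = 0 :=
    hinj (Prod.ext h1 h2)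
  rw [ZMod.natCast_eq_zero_iff] at h3
  have h4 := Nat.le_of_dvd (by omega) h3
  have h5 : m * 2 ≤ m * p := Nat.mul_le_mul_left m (by omega)
  omega

end LemmaA

section Upper

variable [NeZero m] [NeZero p] [Fact p.Prime]

lemma upper_bound (hm : 2 ≤ m) (hmp : m < p) (hp4 : 4 < p) (hr : r ^ m = 1) (hr1 : r ≠ 1)
    (k' : ℕ) (c' : ZMod (Fintype.card (ZMod m × ZMod p)) → ZMod m × ZMod p)
    (h1 : IsHamCycle (MG m p r) c') (h2 : IsSymmHamCycle (MG m p r) c' k') : k' ≤ m := by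
  classical
  obtain ⟨hdvd, α, hα, hrot⟩ := h2
  haveI := card_V_nezero (m := m) (p := p)
  have hcv := card_V (m := m) (p := p)
  have hp0 : 0 < p := (Fact.out : p.Prime).pos
  have hdvd' : k' ∣ m * p := by rwa [hcv] at hdvd
  by_cases hpk : p ∣ k'
  · exfalso
    obtain ⟨d, hd⟩ := hpk
    have hk0 : k' ≠ 0 := by
      intro h0
      rw [h0] at hdvd'
      have h00 := Nat.eq_zero_of_zero_dvd hdvd'
      have : 0 < m * p := Nat.mul_pos (by omega) hp0
      omega
    have hd0 : d ≠ 0 := by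
      intro h0
      rw [h0, Nat.mul_zero] at hd
      exact hk0 hd
    have hdm : d ∣ m := by
      have h3 : p * d ∣ p * m := by
        rw [← hd]
        rwa [mul_comm p m]
      exact (Nat.mul_dvd_mul_iff_left hp0).mp h3
    have hquot : Fintype.card (ZMod m × ZMod p) / k' = m / d := by
      rw [hcv, hd]
      have he : m * p = (m / d) * (p * d) := by
        rw [show (m / d) * (p * d) = (d * (m / d)) * p by ring, Nat.mul_div_cancel' hdm]
      rw [he, Nat.mul_div_cancel _ (by positivity)]
    have hiter : ∀ (t : ℕ) (I : ZMod (Fintype.card (ZMod m × ZMod p))),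
        (α ^ t) (c' I) = c' (I + ((t * (Fintype.card (ZMod m × ZMod p) / k') : ℕ)
          : ZMod (Fintype.card (ZMod m × ZMod p)))) := by
      intro t
      induction t with
      | zero => intro I; simp
      | succ t ih =>
        intro I
        have hstep1 : (α ^ (t + 1)) (c' I) = (α ^ t) (α (c' I)) := by
          rw [pow_succ]
          rfl
        rw [hstep1, hrot I, ih]
        congr 1
        push_cast
        ring
    have hαk : α ^ k' = 1 := by
      apply Equiv.ext
      intro v
      obtain ⟨I, rfl⟩ := h1.1.2 v
      have h9 := hiter k' I
      rw [Nat.mul_div_cancel' hdvd, ZMod.natCast_self, add_zero] at h9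
      rw [h9]
      rfl
    have hβpow : (α ^ d) ^ p = 1 := by
      rw [← pow_mul, show d * p = k' by rw [hd]; ring]
      exact hαk
    have hβaut : α ^ d ∈ autSubgroup (MG m p r) := pow_mem hα d
    have hlayer := layer_fix hm hmp hp4 hr hr1 hβaut hβpow
    have hβrot : ∀ I, (α ^ d) (c' I)
        = c' (I + ((m : ℕ) : ZMod (Fintype.card (ZMod m × ZMod p)))) := by
      intro I
      rw [hiter d I]
      congr 2
      rw [hquot, Nat.mul_div_cancel' hdm]
    exact no_m_rot hm hmp hlayer h1 hβrot
  · have hco : Nat.Coprime k' p :=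
      Nat.coprime_comm.mp (((Fact.out : p.Prime).coprime_iff_not_dvd).mpr hpk)
    have : k' ∣ m := hco.dvd_of_dvd_mul_right hdvd'
    exact Nat.le_of_dvd (by omega) this

lemma comp_eq (hm : 2 ≤ m) (hmp : m < p) (hp4 : 4 < p) (hr : r ^ m = 1) (hr1 : r ≠ 1) :
    hamiltonCompression (MG m p r) = m := by
  obtain ⟨hham, hsym⟩ := lower_bound hm (by omega) hr hr1
  have hmem : m ∈ {k | ∃ c, IsHamCycle (MG m p r) c ∧ IsSymmHamCycle (MG m p r) c k} :=
    ⟨cycC m p r, hham, hsym⟩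
  have hub : ∀ k' ∈ {k | ∃ c, IsHamCycle (MG m p r) c ∧ IsSymmHamCycle (MG m p r) c k},
      k' ≤ m := by
    rintro k' ⟨c', hc1, hc2⟩
    exact upper_bound hm hmp hp4 hr hr1 k' c' hc1 hc2
  exact le_antisymm (csSup_le ⟨m, hmem⟩ hub) (le_csSup ⟨m, fun b hb => hub b hb⟩ hmem)

end Upper

end Stmt6

/-- For every integer `k ≥ 2` and every `N`, there is a Cayley graph
(a graph whose automorphism group contains a regular subgroup) with more than `N`
vertices and Hamilton compression exactly `k`. -/
theorem stmt6 (k : ℕ) (hk : 2 ≤ k) (N : ℕ) :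
    ∃ (V : Type) (inst : Fintype V) (X : SimpleGraph V),
      N < @Fintype.card V inst ∧
      (∃ H : Subgroup (Equiv.Perm V), H ≤ autSubgroup X ∧
        ∀ u v : V, ∃! g : H, (g : Equiv.Perm V) u = v) ∧
      @hamiltonCompression V inst X = k := by
  classical
  obtain ⟨p, hp, hlt, hmod⟩ := Nat.exists_prime_gt_modEq_one (k := k) (N + k + 5) (by omega)
  have hp1 : 1 < p := hp.one_lt
  have hkdvd : k ∣ p - 1 := (Nat.modEq_iff_dvd' (by omega : 1 ≤ p)).mp hmod.symm
  haveI : Fact p.Prime := ⟨hp⟩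
  haveI : NeZero k := ⟨by omega⟩
  haveI : NeZero p := ⟨by omega⟩
  obtain ⟨g, hg⟩ := IsCyclic.exists_generator (α := (ZMod p)ˣ)
  have hordg : orderOf g = p - 1 := by
    rw [orderOf_eq_card_of_forall_mem_zpowers hg, Nat.card_eq_fintype_card, ZMod.card_units]
  set r : (ZMod p)ˣ := g ^ ((p - 1) / k) with hrdef
  have hrm : r ^ k = 1 := by
    rw [hrdef, ← pow_mul, Nat.div_mul_cancel hkdvd, ← hordg, pow_orderOf_eq_one]
  have hr1 : r ≠ 1 := by
    intro h
    have hdvd2 : orderOf g ∣ (p - 1) / k := orderOf_dvd_of_pow_eq_one (by rw [← hrdef]; exact h)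
    rw [hordg] at hdvd2
    have hpos : 0 < (p - 1) / k := Nat.div_pos (Nat.le_of_dvd (by omega) hkdvd) (by omega)
    have hle := Nat.le_of_dvd hpos hdvd2
    have hlt2 : (p - 1) / k < p - 1 := Nat.div_lt_self (by omega) (by omega)
    omega
  refine ⟨ZMod k × ZMod p, inferInstance, Stmt6.MG k p r, ?_,
    ⟨Stmt6.HH hrm, Stmt6.HH_le_aut hrm, Stmt6.HH_regular hrm⟩, ?_⟩
  · rw [Stmt6.card_V]
    have h5 : p ≤ k * p := Nat.le_mul_of_pos_left p (by omega)
    omega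
  · exact Stmt6.comp_eq hk (by omega) (by omega) hrm hr1
end
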